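/- arXiv:1412.8050 — 2 statements merged into one kernel-verified Lean document; each statement's English description precedes it below -/
import Mathlib

section
/- Let φ ∈ 𝔉 be a simple phase function on ℝ^{2d}. Then the map φ₁ : (x,ξ) ↦ φ'_ξ(x,ξ), regarded as a map x ↦ φ'_ξ(x,ξ) from ℝ^d to ℝ^d with parameter ξ ∈ ℝ^d, and the map φ₂ : (ξ,x) ↦ φ'_x(x,ξ), regarded as a map ξ ↦ φ'_x(x,ξ) from ℝ^d to ℝ^d with parameter x ∈ ℝ^d, are SG maps with SG⁰ parameter dependence. If moreover φ ∈ 𝔉^r is regular, then φ₁ and φ₂ are SG diffeomorphisms with SG⁰ parameter dependence. -/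
open MeasureTheory Real

noncomputable section

/-- `ℝ^d`. -/
abbrev Vd (d : ℕ) := Fin d → ℝ

/-- The Japanese bracket `⟨x⟩ = (1+|x|²)^{1/2}` (Euclidean norm). -/
def jb {d : ℕ} (x : Vd d) : ℝ := (1 + ∑ j, (x j) ^ 2) ^ ((1 : ℝ) / 2)

/-- The Euclidean norm `|x|`. -/
def eno {d : ℕ} (x : Vd d) : ℝ := (∑ j, (x j) ^ 2) ^ ((1 : ℝ) / 2)

/-- The order `|α|` of a multi-index, as a real number. -/
def mOrd {d : ℕ} (α : Fin d → ℕ) : ℝ := ∑ j, (α j : ℝ)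

/-- The order `|α|` of a multi-index, as a natural number. -/
def mAbs {d : ℕ} (α : Fin d → ℕ) : ℕ := ∑ j, α j

/-- The multi-index factorial `α!`. -/
def mFact {d : ℕ} (α : Fin d → ℕ) : ℕ := ∏ j, Nat.factorial (α j)

section PD

variable {d : ℕ} {F : Type*} [NormedAddCommGroup F] [NormedSpace ℝ F]

/-- Partial derivative `∂_{x_j}` of a function of two sets of variables. -/
def pd1 (j : Fin d) (f : Vd d → Vd d → F) : Vd d → Vd d → F :=
  fun x ξ => fderiv ℝ (fun y => f y ξ) x (Pi.single j 1)

/-- Partial derivative `∂_{ξ_j}` of a function of two sets of variables. -/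
def pd2 (j : Fin d) (f : Vd d → Vd d → F) : Vd d → Vd d → F :=
  fun x ξ => fderiv ℝ (fun η => f x η) ξ (Pi.single j 1)

/-- Multi-index partial derivative `∂_x^α`. -/
def pdm1 (α : Fin d → ℕ) (f : Vd d → Vd d → F) : Vd d → Vd d → F :=
  (List.finRange d).foldr (fun j g => (pd1 j)^[α j] g) f

/-- Multi-index partial derivative `∂_ξ^β`. -/
def pdm2 (β : Fin d → ℕ) (f : Vd d → Vd d → F) : Vd d → Vd d → F :=
  (List.finRange d).foldr (fun j g => (pd2 j)^[β j] g) f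

/-- Multi-index partial derivative `∂_x^α ∂_ξ^β`. -/
def pdm (α β : Fin d → ℕ) (f : Vd d → Vd d → F) : Vd d → Vd d → F :=
  pdm1 α (pdm2 β f)

/-- Smoothness of a function of two sets of variables. -/
def Smooth2 (f : Vd d → Vd d → F) : Prop :=
  ContDiff ℝ (⊤ : ℕ∞) (fun p : Vd d × Vd d => f p.1 p.2)

end PD

/-- The weight `ϑ_{m,μ}(x,ξ) = ⟨x⟩^m ⟨ξ⟩^μ`. -/
def vth {d : ℕ} (m μ : ℝ) : Vd d → Vd d → ℝ := fun x ξ => jb x ^ m * jb ξ ^ μ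

/-- The class `𝒫_{r,ρ}(ℝ^{2d})` of SG-moderate weights of order `r` and `ρ`:
positive, smooth, polynomially moderate, and satisfying the SG estimates. -/
def IsSGWeight (d : ℕ) (r ρ : ℝ) (ω : Vd d → Vd d → ℝ) : Prop :=
  (∀ x ξ, 0 < ω x ξ) ∧ Smooth2 ω ∧
    (∃ C N : ℝ, 0 < C ∧ ∀ x ξ y η, ω (x + y) (ξ + η) ≤ C * ω x ξ * (jb y * jb η) ^ N) ∧
    (∀ α β : Fin d → ℕ, ∃ C : ℝ, 0 < C ∧ ∀ x ξ,
      jb x ^ (r * mOrd α) * jb ξ ^ (ρ * mOrd β) * ‖pdm α β ω x ξ‖ ≤ C * ω x ξ)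

/-- The generalized SG symbol class `SG^{(ω)}_{r,ρ}(ℝ^{2d})`. -/
def SGClass {F : Type*} [NormedAddCommGroup F] [NormedSpace ℝ F]
    (d : ℕ) (r ρ : ℝ) (ω : Vd d → Vd d → ℝ) (a : Vd d → Vd d → F) : Prop :=
  Smooth2 a ∧ ∀ α β : Fin d → ℕ, ∃ C : ℝ, 0 < C ∧ ∀ x ξ,
    ‖pdm α β a x ξ‖ ≤ C * ω x ξ * jb x ^ (-(r * mOrd α)) * jb ξ ^ (-(ρ * mOrd β))

/-- Membership in `𝒮(ℝ^{2d})`, for a function given in two sets of variables. -/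
def IsSchwartz2 {F : Type*} [NormedAddCommGroup F] [NormedSpace ℝ F]
    (d : ℕ) (a : Vd d → Vd d → F) : Prop :=
  Smooth2 a ∧ ∀ α β : Fin d → ℕ, ∀ N : ℕ, ∃ C : ℝ, ∀ x ξ,
    ‖pdm α β a x ξ‖ ≤ C * jb x ^ (-(N : ℝ)) * jb ξ ^ (-(N : ℝ))

/-- The gradient `φ'_x` in the first set of variables. -/
def gradX {d : ℕ} (φ : Vd d → Vd d → ℝ) : Vd d → Vd d → Vd d :=
  fun x ξ j => pd1 j φ x ξ

/-- The gradient `φ'_ξ` in the second set of variables. -/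
def gradXi {d : ℕ} (φ : Vd d → Vd d → ℝ) : Vd d → Vd d → Vd d :=
  fun x ξ j => pd2 j φ x ξ

/-- Simple SG phase functions: the class `𝔉`. -/
def IsSimplePhase {d : ℕ} (φ : Vd d → Vd d → ℝ) : Prop :=
  SGClass d 1 1 (vth 1 1) φ ∧
    (∃ c C : ℝ, 0 < c ∧ ∀ x ξ, c * jb x ≤ jb (gradXi φ x ξ) ∧ jb (gradXi φ x ξ) ≤ C * jb x) ∧
    (∃ c C : ℝ, 0 < c ∧ ∀ x ξ, c * jb ξ ≤ jb (gradX φ x ξ) ∧ jb (gradX φ x ξ) ≤ C * jb ξ)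

/-- The mixed Hessian `φ''_{xξ}`. -/
def mixedHess {d : ℕ} (φ : Vd d → Vd d → ℝ) (x ξ : Vd d) : Matrix (Fin d) (Fin d) ℝ :=
  Matrix.of fun j k => pd2 k (fun x' ξ' => pd1 j φ x' ξ') x ξ

/-- Regular SG phase functions: the class `𝔉^r`. -/
def IsRegularPhase {d : ℕ} (φ : Vd d → Vd d → ℝ) : Prop :=
  IsSimplePhase φ ∧ ∃ c : ℝ, 0 < c ∧ ∀ x ξ, c ≤ |(mixedHess φ x ξ).det|

/-- SG maps with SG⁰ parameter dependence; the first argument is the variable,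
the second one is the parameter. -/
def IsSGMap (d : ℕ) (φ : Vd d → Vd d → Vd d) : Prop :=
  ContDiff ℝ (⊤ : ℕ∞) (fun p : Vd d × Vd d => φ p.1 p.2) ∧
    (∃ c C : ℝ, 0 < c ∧ ∀ x η, c * jb x ≤ jb (φ x η) ∧ jb (φ x η) ≤ C * jb x) ∧
    (∀ α β : Fin d → ℕ, ∃ C : ℝ, 0 < C ∧ ∀ x η,
      ‖pdm α β φ x η‖ ≤ C * jb x ^ (1 - mOrd α) * jb η ^ (-(mOrd β)))

/-- The Jacobian matrix `φ'_x` of an `ℝ^d`-valued map in the first set of variables. -/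
def jacX {d : ℕ} (φ : Vd d → Vd d → Vd d) (x η : Vd d) : Matrix (Fin d) (Fin d) ℝ :=
  Matrix.of fun j k => pd1 k (fun x' η' => φ x' η' j) x η

/-- SG diffeomorphisms with SG⁰ parameter dependence. -/
def IsSGDiffeo (d : ℕ) (φ : Vd d → Vd d → Vd d) : Prop :=
  IsSGMap d φ ∧ ∃ ε : ℝ, 0 < ε ∧ ∀ x η, ε ≤ |(jacX φ x η).det|

/-- `(φ,1)`-invariance of a weight. -/
def Invariant1 {d : ℕ} (φ : Vd d → Vd d → Vd d) (ω : Vd d → Vd d → ℝ) : Prop :=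
  ∃ C : ℝ, 0 < C ∧ ∀ x ξ η₁ η₂, ω (φ x (η₁ + η₂)) ξ ≤ C * ω (φ x η₁) ξ

/-- `(φ,2)`-invariance of a weight. -/
def Invariant2 {d : ℕ} (φ : Vd d → Vd d → Vd d) (ω : Vd d → Vd d → ℝ) : Prop :=
  ∃ C : ℝ, 0 < C ∧ ∀ x ξ η₁ η₂, ω x (φ ξ (η₁ + η₂)) ≤ C * ω x (φ ξ η₁)

/-- `(Θ_{1,φ}ω)(x,ξ) = ω(φ'_ξ(x,ξ),ξ)`. -/
def Theta1 {d : ℕ} (φ : Vd d → Vd d → ℝ) (ω : Vd d → Vd d → ℝ) : Vd d → Vd d → ℝ :=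
  fun x ξ => ω (gradXi φ x ξ) ξ

/-- `(Θ_{2,φ}ω)(x,ξ) = ω(x,φ'_x(x,ξ))`. -/
def Theta2 {d : ℕ} (φ : Vd d → Vd d → ℝ) (ω : Vd d → Vd d → ℝ) : Vd d → Vd d → ℝ :=
  fun x ξ => ω x (gradX φ x ξ)

/-- The real inner product `⟨x,ξ⟩`. -/
def dotR {d : ℕ} (x ξ : Vd d) : ℝ := ∑ j, x j * ξ j

/-- The Fourier transform `û(ξ) = (2π)^{-d/2} ∫ e^{-i⟨x,ξ⟩} u(x) dx`. -/
def FT {d : ℕ} (u : Vd d → ℂ) (ξ : Vd d) : ℂ :=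
  (((2 * π) ^ (-(d : ℝ) / 2) : ℝ) : ℂ) *
    ∫ x : Vd d, Complex.exp (-(Complex.I * (dotR x ξ : ℂ))) * u x

/-- The type I SG Fourier integral operator `Op_φ(a)`. -/
def OpI {d : ℕ} (φ : Vd d → Vd d → ℝ) (a : Vd d → Vd d → ℂ) (u : Vd d → ℂ) (x : Vd d) : ℂ :=
  (((2 * π) ^ (-(d : ℝ) / 2) : ℝ) : ℂ) *
    ∫ ξ : Vd d, Complex.exp (Complex.I * (φ x ξ : ℂ)) * a x ξ * FT u ξ

/-- The type II SG Fourier integral operator `Op*_φ(b)`. -/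
def OpII {d : ℕ} (φ : Vd d → Vd d → ℝ) (b : Vd d → Vd d → ℂ) (u : Vd d → ℂ) (x : Vd d) : ℂ :=
  (((2 * π) ^ (-(d : ℝ)) : ℝ) : ℂ) *
    ∫ ξ : Vd d, ∫ y : Vd d,
      Complex.exp (Complex.I * ((dotR x ξ - φ y ξ : ℝ) : ℂ)) * (starRingEnd ℂ) (b y ξ) * u y

/-- The pseudo-differential operator `Op(p)`. -/
def OpPsi {d : ℕ} (p : Vd d → Vd d → ℂ) (u : Vd d → ℂ) (x : Vd d) : ℂ :=
  (((2 * π) ^ (-(d : ℝ)) : ℝ) : ℂ) *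
    ∫ ξ : Vd d, ∫ y : Vd d,
      Complex.exp (Complex.I * ((dotR (x - y) ξ : ℝ) : ℂ)) * p x ξ * u y

/-- `ψ(x,y,ξ) = φ(y,ξ) − φ(x,ξ) − ⟨y−x, φ'_x(x,ξ)⟩`. -/
def psiPh {d : ℕ} (φ : Vd d → Vd d → ℝ) (x y ξ : Vd d) : ℝ :=
  φ y ξ - φ x ξ - dotR (y - x) (gradX φ x ξ)

/-- `D_y^α [ e^{iψ(x,y,ξ)} a(y,ξ) ]` evaluated at `y = x`, where `D = -i∂`. -/
def expDTerm {d : ℕ} (φ : Vd d → Vd d → ℝ) (a : Vd d → Vd d → ℂ)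
    (α : Fin d → ℕ) (x ξ : Vd d) : ℂ :=
  (-Complex.I) ^ (mAbs α) *
    pdm1 α (fun y η => Complex.exp (Complex.I * (psiPh φ x y η : ℂ)) * a y η) x ξ

/-- The term `i^{|α|}/α! · (D_ξ^α p)(x,φ'_x(x,ξ)) · D_y^α[e^{iψ(x,y,ξ)} a(y,ξ)]|_{y=x}`. -/
def asymTerm {d : ℕ} (φ : Vd d → Vd d → ℝ) (p a : Vd d → Vd d → ℂ)
    (α : Fin d → ℕ) (x ξ : Vd d) : ℂ :=
  (Complex.I ^ (mAbs α) / (mFact α : ℂ)) *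
    ((-Complex.I) ^ (mAbs α) * pdm2 α p x (gradX φ x ξ)) * expDTerm φ a α x ξ

/-- The finite set of multi-indices `α` with `|α| < N`. -/
def multiIndicesLt (d N : ℕ) : Finset (Fin d → ℕ) :=
  (Fintype.piFinset fun _ : Fin d => Finset.range N).filter fun α => mAbs α < N

/-- SG compatible cut-off functions along the diagonal, the set `Ξ^Δ(k)`. -/
def IsDiagCutoff {d : ℕ} (k : ℝ) (χ : Vd d → Vd d → ℝ) : Prop :=
  SGClass d 1 1 (vth 0 0) χ ∧
    (∀ x y, eno (y - x) ≤ k * jb x / 2 → χ x y = 1) ∧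
    (∀ x y, k * jb x < eno (y - x) → χ x y = 0)

/-- SG ellipticity of a symbol with respect to a weight. -/
def SGElliptic {d : ℕ} (ω : Vd d → Vd d → ℝ) (a : Vd d → Vd d → ℂ) : Prop :=
  ∃ R C : ℝ, 0 < C ∧ ∀ x ξ, R ≤ eno x + eno ξ → ω x ξ ≤ C * ‖a x ξ‖

/-- The Schwartz space `𝒮(ℝ^d)`. -/
abbrev SchS (d : ℕ) := SchwartzMap (Vd d) ℂ

/-- Real-linear tempered distributions, `𝒮'(ℝ^d)`. -/
abbrev TempDist (d : ℕ) := SchS d →L[ℝ] ℂ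

lemma schwartz_hasTemperateGrowth {d : ℕ} (u : SchS d) :
    Function.HasTemperateGrowth (⇑u) := by
  refine ⟨u.smooth ⊤, fun n => ⟨0, SchwartzMap.seminorm ℝ 0 n u, fun x => ?_⟩⟩
  simpa using u.norm_iteratedFDeriv_le_seminorm ℝ n x

/-- The canonical embedding of `𝒮(ℝ^d)` into `𝒮'(ℝ^d)`, `u ↦ (v ↦ ∫ u·v)`. -/
def embS {d : ℕ} (u : SchS d) : TempDist d :=
  (SchwartzMap.integralCLM ℝ (volume : Measure (Vd d))).comp
    (SchwartzMap.bilinLeftCLM (ContinuousLinearMap.mul ℝ ℂ) (schwartz_hasTemperateGrowth u))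

end
namespace SG3

section ProdLayer
variable {E F : Type*} [NormedAddCommGroup E] [NormedSpace ℝ E]
  [NormedAddCommGroup F] [NormedSpace ℝ F]

theorem dvSmooth {P : E → F} (hP : ContDiff ℝ (⊤ : ℕ∞) P) (v : E) :
    ContDiff ℝ (⊤ : ℕ∞) (fun p => fderiv ℝ P p v) :=
  ((ContinuousLinearMap.apply ℝ F v).contDiff).comp (hP.fderiv_right (by simp))

theorem dvComm {P : E → F} (hP : ContDiff ℝ (⊤ : ℕ∞) P) (v w : E) (p : E) :
    fderiv ℝ (fun q => fderiv ℝ P q w) p v = fderiv ℝ (fun q => fderiv ℝ P q v) p w := by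
  have hdP : ContDiff ℝ (⊤ : ℕ∞) (fderiv ℝ P) := hP.fderiv_right (by simp)
  have hx : HasFDerivAt (fderiv ℝ P) (fderiv ℝ (fderiv ℝ P) p) p :=
    (hdP.differentiable (by simp) p).hasFDerivAt
  have hf : ∀ y, HasFDerivAt P (fderiv ℝ P y) y :=
    fun y => (hP.differentiable (by simp) y).hasFDerivAt
  have h1 : ∀ u : E, fderiv ℝ (fun q => fderiv ℝ P q u) p
      = (ContinuousLinearMap.apply ℝ F u).comp (fderiv ℝ (fderiv ℝ P) p) := fun u =>
    (((ContinuousLinearMap.apply ℝ F u).hasFDerivAt).comp p hx).fderiv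
  rw [h1 w, h1 v]
  exact second_derivative_symmetric hf hx v w

end ProdLayer

section PdLayer
variable {d : ℕ} {F : Type*} [NormedAddCommGroup F] [NormedSpace ℝ F]

/-- Uncurried version of a two-variable function. -/
def unc (f : Vd d → Vd d → F) : Vd d × Vd d → F := fun p => f p.1 p.2

lemma smooth2_iff {f : Vd d → Vd d → F} : Smooth2 f ↔ ContDiff ℝ (⊤ : ℕ∞) (unc f) := Iff.rfl

lemma diff_fst {f : Vd d → Vd d → F} (hf : Smooth2 f) (x ξ : Vd d) :
    HasFDerivAt (fun y => f y ξ)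
      ((fderiv ℝ (unc f) (x, ξ)).comp ((ContinuousLinearMap.id ℝ (Vd d)).prod 0)) x := by
  have hd : HasFDerivAt (unc f) (fderiv ℝ (unc f) (x, ξ)) (x, ξ) :=
    (hf.differentiable (by simp) (x, ξ)).hasFDerivAt
  exact hd.comp x (HasFDerivAt.prodMk (hasFDerivAt_id (𝕜 := ℝ) x) (hasFDerivAt_const ξ x))

lemma diff_snd {f : Vd d → Vd d → F} (hf : Smooth2 f) (x ξ : Vd d) :
    HasFDerivAt (fun η => f x η)
      ((fderiv ℝ (unc f) (x, ξ)).comp ((0 : Vd d →L[ℝ] Vd d).prod (ContinuousLinearMap.id ℝ (Vd d)))) ξ := by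
  have hd : HasFDerivAt (unc f) (fderiv ℝ (unc f) (x, ξ)) (x, ξ) :=
    (hf.differentiable (by simp) (x, ξ)).hasFDerivAt
  exact hd.comp ξ (HasFDerivAt.prodMk (hasFDerivAt_const x ξ) (hasFDerivAt_id ξ))

lemma pd1_eq {f : Vd d → Vd d → F} (hf : Smooth2 f) (j : Fin d) (x ξ : Vd d) :
    pd1 j f x ξ = fderiv ℝ (unc f) (x, ξ) (Pi.single j 1, 0) := by
  show fderiv ℝ (fun y => f y ξ) x (Pi.single j 1) = _
  rw [(diff_fst hf x ξ).fderiv]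
  simp

lemma pd2_eq {f : Vd d → Vd d → F} (hf : Smooth2 f) (j : Fin d) (x ξ : Vd d) :
    pd2 j f x ξ = fderiv ℝ (unc f) (x, ξ) (0, Pi.single j 1) := by
  show fderiv ℝ (fun η => f x η) ξ (Pi.single j 1) = _
  rw [(diff_snd hf x ξ).fderiv]
  simp

lemma unc_pd1 {f : Vd d → Vd d → F} (hf : Smooth2 f) (j : Fin d) :
    unc (pd1 j f) = fun p => fderiv ℝ (unc f) p (Pi.single j 1, 0) :=
  funext fun p => pd1_eq hf j p.1 p.2

lemma unc_pd2 {f : Vd d → Vd d → F} (hf : Smooth2 f) (j : Fin d) :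
    unc (pd2 j f) = fun p => fderiv ℝ (unc f) p (0, Pi.single j 1) :=
  funext fun p => pd2_eq hf j p.1 p.2

lemma smooth2_pd1 {f : Vd d → Vd d → F} (hf : Smooth2 f) (j : Fin d) :
    Smooth2 (pd1 j f) := by
  rw [smooth2_iff, unc_pd1 hf j]; exact dvSmooth hf _

lemma smooth2_pd2 {f : Vd d → Vd d → F} (hf : Smooth2 f) (j : Fin d) :
    Smooth2 (pd2 j f) := by
  rw [smooth2_iff, unc_pd2 hf j]; exact dvSmooth hf _

lemma pd1_pd2_comm {f : Vd d → Vd d → F} (hf : Smooth2 f) (j k : Fin d) :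
    pd1 j (pd2 k f) = pd2 k (pd1 j f) := by
  funext x ξ
  rw [pd1_eq (smooth2_pd2 hf k) j, pd2_eq (smooth2_pd1 hf j) k, unc_pd2 hf k, unc_pd1 hf j]
  exact dvComm hf _ _ _

lemma pd2_pd2_comm {f : Vd d → Vd d → F} (hf : Smooth2 f) (j k : Fin d) :
    pd2 j (pd2 k f) = pd2 k (pd2 j f) := by
  funext x ξ
  rw [pd2_eq (smooth2_pd2 hf k) j, pd2_eq (smooth2_pd2 hf j) k, unc_pd2 hf k, unc_pd2 hf j]
  exact dvComm hf _ _ _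

lemma pd1_pd1_comm {f : Vd d → Vd d → F} (hf : Smooth2 f) (j k : Fin d) :
    pd1 j (pd1 k f) = pd1 k (pd1 j f) := by
  funext x ξ
  rw [pd1_eq (smooth2_pd1 hf k) j, pd1_eq (smooth2_pd1 hf j) k, unc_pd1 hf k, unc_pd1 hf j]
  exact dvComm hf _ _ _

end PdLayer

end SG3
namespace SG3

section FoldLayer
variable {d : ℕ} {F : Type*} [NormedAddCommGroup F] [NormedSpace ℝ F]
variable {T U : Fin d → (Vd d → Vd d → F) → (Vd d → Vd d → F)}
variable {β : Fin d → ℕ}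

lemma smooth_iter (hUs : ∀ j f, Smooth2 f → Smooth2 (U j f))
    {f : Vd d → Vd d → F} (hf : Smooth2 f) (k : Fin d) (n : ℕ) :
    Smooth2 ((U k)^[n] f) := by
  induction n with
  | zero => exact hf
  | succ n ih => rw [Function.iterate_succ_apply']; exact hUs k _ ih

lemma smooth_fold (hUs : ∀ j f, Smooth2 f → Smooth2 (U j f))
    (l : List (Fin d)) {f : Vd d → Vd d → F} (hf : Smooth2 f) :
    Smooth2 (l.foldr (fun j g => (U j)^[β j] g) f) := by
  induction l with
  | nil => exact hf
  | cons k t ih => exact smooth_iter hUs ih k (β k)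

lemma T_iterU (hUs : ∀ j f, Smooth2 f → Smooth2 (U j f))
    (hTU : ∀ j k f, Smooth2 f → T j (U k f) = U k (T j f))
    {f : Vd d → Vd d → F} (hf : Smooth2 f) (j k : Fin d) (n : ℕ) :
    T j ((U k)^[n] f) = (U k)^[n] (T j f) := by
  induction n generalizing f hf with
  | zero => rfl
  | succ n ih =>
      rw [Function.iterate_succ_apply, Function.iterate_succ_apply,
        ih (hUs k f hf), hTU j k f hf]

lemma T_foldU (hUs : ∀ j f, Smooth2 f → Smooth2 (U j f))
    (hTU : ∀ j k f, Smooth2 f → T j (U k f) = U k (T j f))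
    (l : List (Fin d)) {f : Vd d → Vd d → F} (hf : Smooth2 f) (j : Fin d) :
    T j (l.foldr (fun k g => (U k)^[β k] g) f) = l.foldr (fun k g => (U k)^[β k] g) (T j f) := by
  induction l with
  | nil => rfl
  | cons k t ih =>
      simp only [List.foldr_cons]
      rw [T_iterU hUs hTU (smooth_fold hUs t hf) j k (β k), ih]

lemma iterT_foldU (hUs : ∀ j f, Smooth2 f → Smooth2 (U j f))
    (hTs : ∀ j f, Smooth2 f → Smooth2 (T j f))
    (hTU : ∀ j k f, Smooth2 f → T j (U k f) = U k (T j f))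
    (l : List (Fin d)) {f : Vd d → Vd d → F} (hf : Smooth2 f) (j : Fin d) (n : ℕ) :
    (T j)^[n] (l.foldr (fun k g => (U k)^[β k] g) f)
      = l.foldr (fun k g => (U k)^[β k] g) ((T j)^[n] f) := by
  induction n generalizing f hf with
  | zero => rfl
  | succ n ih =>
      rw [Function.iterate_succ_apply, Function.iterate_succ_apply,
        ← ih (hTs j f hf), T_foldU hUs hTU l hf j]

lemma foldT_foldU {α : Fin d → ℕ} (hUs : ∀ j f, Smooth2 f → Smooth2 (U j f))
    (hTs : ∀ j f, Smooth2 f → Smooth2 (T j f))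
    (hTU : ∀ j k f, Smooth2 f → T j (U k f) = U k (T j f))
    (l₁ l₂ : List (Fin d)) {f : Vd d → Vd d → F} (hf : Smooth2 f) :
    l₁.foldr (fun j g => (T j)^[α j] g) (l₂.foldr (fun k g => (U k)^[β k] g) f)
      = l₂.foldr (fun k g => (U k)^[β k] g) (l₁.foldr (fun j g => (T j)^[α j] g) f) := by
  induction l₁ with
  | nil => rfl
  | cons j t ih =>
      simp only [List.foldr_cons]
      rw [ih, iterT_foldU hUs hTs hTU l₂ (smooth_fold hTs (β := α) t hf) j (α j)]

lemma foldU_congr {β' : Fin d → ℕ} (l : List (Fin d)) (h : ∀ k ∈ l, β k = β' k)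
    (f : Vd d → Vd d → F) :
    l.foldr (fun k g => (U k)^[β k] g) f = l.foldr (fun k g => (U k)^[β' k] g) f := by
  induction l with
  | nil => rfl
  | cons k t ih =>
      simp only [List.foldr_cons]
      rw [ih (fun k hk => h k (List.mem_cons_of_mem _ hk)), h k List.mem_cons_self]

lemma foldU_succ (hUs : ∀ j f, Smooth2 f → Smooth2 (U j f))
    (hUU : ∀ j k f, Smooth2 f → U j (U k f) = U k (U j f))
    (l : List (Fin d)) (hl : l.Nodup) {j : Fin d} (hj : j ∈ l)
    {f : Vd d → Vd d → F} (hf : Smooth2 f) :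
    l.foldr (fun k g => (U k)^[((β + Pi.single j 1 : Fin d → ℕ)) k] g) f
      = U j (l.foldr (fun k g => (U k)^[β k] g) f) := by
  induction l with
  | nil => exact absurd hj List.not_mem_nil
  | cons k t ih =>
      rw [List.nodup_cons] at hl
      simp only [List.foldr_cons]
      by_cases hjk : j = k
      · subst hjk
        have hnt : j ∉ t := hl.1
        have hcg : t.foldr (fun k g => (U k)^[((β + Pi.single j 1 : Fin d → ℕ)) k] g) f
            = t.foldr (fun k g => (U k)^[β k] g) f := by
          refine foldU_congr t (fun k hk => ?_) f
          have hkj : k ≠ j := fun h => hnt (h ▸ hk)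
          simp [Pi.single_eq_of_ne hkj]
        have h1 : ((β + Pi.single j 1 : Fin d → ℕ)) j = β j + 1 := by simp
        rw [hcg, h1, Function.iterate_succ_apply']
      · have hjt : j ∈ t := (List.mem_cons.1 hj).resolve_left hjk
        rw [ih hl.2 hjt]
        have h2 : ((β + Pi.single j 1 : Fin d → ℕ)) k = β k := by
          have : k ≠ j := Ne.symm hjk
          simp [Pi.single_eq_of_ne this]
        rw [h2, T_iterU hUs hUU (smooth_fold hUs t hf) j k (β k)]

end FoldLayer

end SG3
namespace SG3

section PdmLayer
variable {d : ℕ} {F : Type*} [NormedAddCommGroup F] [NormedSpace ℝ F]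
variable {f : Vd d → Vd d → F} {α β : Fin d → ℕ} {j : Fin d}

lemma h1s : ∀ (j : Fin d) (f : Vd d → Vd d → F), Smooth2 f → Smooth2 (pd1 j f) :=
  fun j f h => smooth2_pd1 h j

lemma h2s : ∀ (j : Fin d) (f : Vd d → Vd d → F), Smooth2 f → Smooth2 (pd2 j f) :=
  fun j f h => smooth2_pd2 h j

lemma h12 : ∀ (j k : Fin d) (f : Vd d → Vd d → F), Smooth2 f → pd1 j (pd2 k f) = pd2 k (pd1 j f) :=
  fun j k f h => pd1_pd2_comm h j k

lemma h11 : ∀ (j k : Fin d) (f : Vd d → Vd d → F), Smooth2 f → pd1 j (pd1 k f) = pd1 k (pd1 j f) :=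
  fun j k f h => pd1_pd1_comm h j k

lemma h22 : ∀ (j k : Fin d) (f : Vd d → Vd d → F), Smooth2 f → pd2 j (pd2 k f) = pd2 k (pd2 j f) :=
  fun j k f h => pd2_pd2_comm h j k

lemma smooth2_pdm1 (hf : Smooth2 f) : Smooth2 (pdm1 α f) :=
  smooth_fold h1s (List.finRange d) hf

lemma smooth2_pdm2 (hf : Smooth2 f) : Smooth2 (pdm2 β f) :=
  smooth_fold h2s (List.finRange d) hf

lemma smooth2_pdm (hf : Smooth2 f) : Smooth2 (pdm α β f) :=
  smooth2_pdm1 (smooth2_pdm2 hf)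

lemma pdm1_pdm2_comm (hf : Smooth2 f) : pdm1 α (pdm2 β f) = pdm2 β (pdm1 α f) :=
  foldT_foldU h2s h1s h12 (List.finRange d) (List.finRange d) hf

lemma pd2_pdm2 (hf : Smooth2 f) : pdm2 β (pd2 j f) = pd2 j (pdm2 β f) :=
  (T_foldU h2s h22 (List.finRange d) hf j).symm

lemma pd1_pdm2 (hf : Smooth2 f) : pdm2 β (pd1 j f) = pd1 j (pdm2 β f) :=
  (T_foldU h2s h12 (List.finRange d) hf j).symm

lemma pd1_pdm1 (hf : Smooth2 f) : pdm1 α (pd1 j f) = pd1 j (pdm1 α f) :=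
  (T_foldU h1s h11 (List.finRange d) hf j).symm

lemma pdm2_single (hf : Smooth2 f) :
    pdm2 ((β + Pi.single j 1 : Fin d → ℕ)) f = pd2 j (pdm2 β f) :=
  foldU_succ h2s h22 (List.finRange d) (List.nodup_finRange d) (List.mem_finRange j) hf

lemma pdm1_single (hf : Smooth2 f) :
    pdm1 ((α + Pi.single j 1 : Fin d → ℕ)) f = pd1 j (pdm1 α f) :=
  foldU_succ h1s h11 (List.finRange d) (List.nodup_finRange d) (List.mem_finRange j) hf

lemma pdm_pd2 (hf : Smooth2 f) :
    pdm α β (pd2 j f) = pdm α ((β + Pi.single j 1 : Fin d → ℕ)) f := by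
  show pdm1 α (pdm2 β (pd2 j f)) = pdm1 α (pdm2 ((β + Pi.single j 1 : Fin d → ℕ)) f)
  rw [pd2_pdm2 hf, pdm2_single hf]

lemma pdm_pd1 (hf : Smooth2 f) :
    pdm β α (pd1 j f) = pdm ((β + Pi.single j 1 : Fin d → ℕ)) α f := by
  show pdm1 β (pdm2 α (pd1 j f)) = pdm1 ((β + Pi.single j 1 : Fin d → ℕ)) (pdm2 α f)
  rw [pd1_pdm2 hf, pd1_pdm1 (smooth2_pdm2 hf), pdm1_single (smooth2_pdm2 hf)]

/-- Swapped arguments. -/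
def sw (f : Vd d → Vd d → F) : Vd d → Vd d → F := fun x ξ => f ξ x

lemma smooth2_sw (hf : Smooth2 f) : Smooth2 (sw f) := by
  have : (fun p : Vd d × Vd d => sw f p.1 p.2)
      = (fun p : Vd d × Vd d => f p.1 p.2) ∘ Prod.swap := rfl
  rw [Smooth2, this]
  exact hf.comp (contDiff_snd.prodMk contDiff_fst)

lemma iter1_sw (n : ℕ) : ∀ f : Vd d → Vd d → F, (pd1 j)^[n] (sw f) = sw ((pd2 j)^[n] f) := by
  induction n with
  | zero => intro f; rfl
  | succ n ih =>
      intro f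
      rw [Function.iterate_succ_apply, Function.iterate_succ_apply]
      exact ih (pd2 j f)

lemma iter2_sw (n : ℕ) : ∀ f : Vd d → Vd d → F, (pd2 j)^[n] (sw f) = sw ((pd1 j)^[n] f) := by
  induction n with
  | zero => intro f; rfl
  | succ n ih =>
      intro f
      rw [Function.iterate_succ_apply, Function.iterate_succ_apply]
      exact ih (pd1 j f)

lemma pdm1_sw : ∀ f : Vd d → Vd d → F, pdm1 α (sw f) = sw (pdm2 α f) := by
  show ∀ f : Vd d → Vd d → F, (List.finRange d).foldr (fun j g => (pd1 j)^[α j] g) (sw f)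
    = sw ((List.finRange d).foldr (fun j g => (pd2 j)^[α j] g) f)
  induction List.finRange d with
  | nil => intro f; rfl
  | cons k t ih =>
      intro f
      simp only [List.foldr_cons]
      rw [ih f, iter1_sw (α k)]

lemma pdm2_sw : ∀ f : Vd d → Vd d → F, pdm2 β (sw f) = sw (pdm1 β f) := by
  show ∀ f : Vd d → Vd d → F, (List.finRange d).foldr (fun j g => (pd2 j)^[β j] g) (sw f)
    = sw ((List.finRange d).foldr (fun j g => (pd1 j)^[β j] g) f)
  induction List.finRange d with
  | nil => intro f; rfl
  | cons k t ih =>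
      intro f
      simp only [List.foldr_cons]
      rw [ih f, iter2_sw (β k)]

lemma pdm_sw (hf : Smooth2 f) : pdm α β (sw f) = sw (pdm β α f) := by
  show pdm1 α (pdm2 β (sw f)) = sw (pdm1 β (pdm2 α f))
  rw [pdm2_sw f, pdm1_sw (pdm1 β f), (pdm1_pdm2_comm (α := β) (β := α) hf).symm]

end PdmLayer

section EvalLayer
variable {d : ℕ}
variable {f : Vd d → Vd d → Vd d} {α β : Fin d → ℕ} {j k : Fin d}

/-- Component of a `Vd d`-valued function. -/
def cmp (k : Fin d) (f : Vd d → Vd d → Vd d) : Vd d → Vd d → ℝ := fun x ξ => f x ξ k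

lemma smooth2_cmp (hf : Smooth2 f) (k : Fin d) : Smooth2 (cmp k f) :=
  contDiff_pi.1 hf k

lemma pd1_cmp (hf : Smooth2 f) : pd1 j (cmp k f) = cmp k (pd1 j f) := by
  funext x ξ
  have hdiff : DifferentiableAt ℝ (fun y => f y ξ) x := (diff_fst hf x ξ).differentiableAt
  have hc : HasFDerivAt (fun y => f y ξ k)
      ((ContinuousLinearMap.proj (R := ℝ) (φ := fun _ : Fin d => ℝ) k).comp
        (fderiv ℝ (fun y => f y ξ) x)) x :=
    ((ContinuousLinearMap.proj (R := ℝ) (φ := fun _ : Fin d => ℝ) k).hasFDerivAt).comp x hdiff.hasFDerivAt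
  show fderiv ℝ (fun y => f y ξ k) x (Pi.single j 1) = _
  rw [hc.fderiv]
  rfl

lemma pd2_cmp (hf : Smooth2 f) : pd2 j (cmp k f) = cmp k (pd2 j f) := by
  funext x ξ
  have hdiff : DifferentiableAt ℝ (fun η => f x η) ξ := (diff_snd hf x ξ).differentiableAt
  have hc : HasFDerivAt (fun η => f x η k)
      ((ContinuousLinearMap.proj (R := ℝ) (φ := fun _ : Fin d => ℝ) k).comp
        (fderiv ℝ (fun η => f x η) ξ)) ξ :=
    ((ContinuousLinearMap.proj (R := ℝ) (φ := fun _ : Fin d => ℝ) k).hasFDerivAt).comp ξ hdiff.hasFDerivAt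
  show fderiv ℝ (fun η => f x η k) ξ (Pi.single j 1) = _
  rw [hc.fderiv]
  rfl

lemma iter1_cmp (n : ℕ) : ∀ f : Vd d → Vd d → Vd d, Smooth2 f →
    (pd1 j)^[n] (cmp k f) = cmp k ((pd1 j)^[n] f) := by
  induction n with
  | zero => intro f _; rfl
  | succ n ih =>
      intro f hf
      rw [Function.iterate_succ_apply, Function.iterate_succ_apply, pd1_cmp hf,
        ih (pd1 j f) (smooth2_pd1 hf j)]

lemma iter2_cmp (n : ℕ) : ∀ f : Vd d → Vd d → Vd d, Smooth2 f →
    (pd2 j)^[n] (cmp k f) = cmp k ((pd2 j)^[n] f) := by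
  induction n with
  | zero => intro f _; rfl
  | succ n ih =>
      intro f hf
      rw [Function.iterate_succ_apply, Function.iterate_succ_apply, pd2_cmp hf,
        ih (pd2 j f) (smooth2_pd2 hf j)]

lemma pdm1_cmp (hf : Smooth2 f) : pdm1 α (cmp k f) = cmp k (pdm1 α f) := by
  show (List.finRange d).foldr (fun j g => (pd1 j)^[α j] g) (cmp k f)
    = cmp k ((List.finRange d).foldr (fun j g => (pd1 j)^[α j] g) f)
  induction List.finRange d with
  | nil => rfl
  | cons m t ih =>
      simp only [List.foldr_cons]
      rw [ih, iter1_cmp (α m) _ (smooth_fold h1s t hf)]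

lemma pdm2_cmp (hf : Smooth2 f) : pdm2 β (cmp k f) = cmp k (pdm2 β f) := by
  show (List.finRange d).foldr (fun j g => (pd2 j)^[β j] g) (cmp k f)
    = cmp k ((List.finRange d).foldr (fun j g => (pd2 j)^[β j] g) f)
  induction List.finRange d with
  | nil => rfl
  | cons m t ih =>
      simp only [List.foldr_cons]
      rw [ih, iter2_cmp (β m) _ (smooth_fold h2s t hf)]

lemma pdm_cmp (hf : Smooth2 f) : pdm α β (cmp k f) = cmp k (pdm α β f) := by
  show pdm1 α (pdm2 β (cmp k f)) = cmp k (pdm1 α (pdm2 β f))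
  rw [pdm2_cmp hf, pdm1_cmp (smooth2_pdm2 hf)]

end EvalLayer

end SG3
namespace SG3

section Analysis
variable {d : ℕ}

lemma jb_pos (x : Vd d) : 0 < jb x := by
  have h : (0:ℝ) < 1 + ∑ j, (x j)^2 := by positivity
  exact Real.rpow_pos_of_pos h _

lemma mOrd_single (β : Fin d → ℕ) (j : Fin d) :
    mOrd ((β + Pi.single j 1 : Fin d → ℕ)) = mOrd β + 1 := by
  have h0 : ∀ k, ((β + Pi.single j 1 : Fin d → ℕ)) k = β k + (Pi.single j 1 : Fin d → ℕ) k := fun k => rfl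
  simp only [mOrd, h0, Nat.cast_add, Finset.sum_add_distrib]
  congr 1
  have h1 : ∑ k, ((Pi.single j 1 : Fin d → ℕ) k : ℝ)
      = ((∑ k, (Pi.single j 1 : Fin d → ℕ) k : ℕ) : ℝ) := by
    rw [Nat.cast_sum]
  rw [h1, Finset.sum_pi_single']
  simp

lemma est {C a b : ℝ} (x ξ : Vd d) :
    C * vth 1 1 x ξ * jb x ^ (-(1 * a)) * jb ξ ^ (-(1 * (b + 1)))
      = C * jb x ^ (1 - a) * jb ξ ^ (-b) := by
  have hx := jb_pos x
  have hξ := jb_pos ξ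
  have h1 : vth 1 1 x ξ = jb x ^ (1:ℝ) * jb ξ ^ (1:ℝ) := rfl
  have e1 : jb x ^ (1:ℝ) * jb x ^ (-(1*a)) = jb x ^ (1 - a) := by
    rw [← Real.rpow_add hx, show (1:ℝ) + -(1*a) = 1 - a by ring]
  have e2 : jb ξ ^ (1:ℝ) * jb ξ ^ (-(1*(b+1))) = jb ξ ^ (-b) := by
    rw [← Real.rpow_add hξ, show (1:ℝ) + -(1*(b+1)) = -b by ring]
  calc C * vth 1 1 x ξ * jb x ^ (-(1*a)) * jb ξ ^ (-(1*(b+1)))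
      = C * (jb x ^ (1:ℝ) * jb x ^ (-(1*a))) * (jb ξ ^ (1:ℝ) * jb ξ ^ (-(1*(b+1)))) := by
        rw [h1]; ring
    _ = C * jb x ^ (1-a) * jb ξ ^ (-b) := by rw [e1, e2]

lemma est2 {C a b : ℝ} (x ξ : Vd d) :
    C * vth 1 1 x ξ * jb x ^ (-(1 * (b + 1))) * jb ξ ^ (-(1 * a))
      = C * jb ξ ^ (1 - a) * jb x ^ (-b) := by
  have hx := jb_pos x
  have hξ := jb_pos ξ
  have h1 : vth 1 1 x ξ = jb x ^ (1:ℝ) * jb ξ ^ (1:ℝ) := rfl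
  have e1 : jb ξ ^ (1:ℝ) * jb ξ ^ (-(1*a)) = jb ξ ^ (1 - a) := by
    rw [← Real.rpow_add hξ, show (1:ℝ) + -(1*a) = 1 - a by ring]
  have e2 : jb x ^ (1:ℝ) * jb x ^ (-(1*(b+1))) = jb x ^ (-b) := by
    rw [← Real.rpow_add hx, show (1:ℝ) + -(1*(b+1)) = -b by ring]
  calc C * vth 1 1 x ξ * jb x ^ (-(1*(b+1))) * jb ξ ^ (-(1*a))
      = C * (jb ξ ^ (1:ℝ) * jb ξ ^ (-(1*a))) * (jb x ^ (1:ℝ) * jb x ^ (-(1*(b+1)))) := by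
        rw [h1]; ring
    _ = C * jb ξ ^ (1-a) * jb x ^ (-b) := by rw [e1, e2]

variable {φ : Vd d → Vd d → ℝ}

lemma smooth2_gradXi (h : Smooth2 φ) : Smooth2 (gradXi φ) :=
  contDiff_pi.2 fun j => smooth2_pd2 h j

lemma smooth2_gradX (h : Smooth2 φ) : Smooth2 (gradX φ) :=
  contDiff_pi.2 fun j => smooth2_pd1 h j

lemma key1 (h : Smooth2 φ) (α β : Fin d → ℕ) (j : Fin d) (x ξ : Vd d) :
    pdm α β (gradXi φ) x ξ j = pdm α ((β + Pi.single j 1 : Fin d → ℕ)) φ x ξ := by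
  have h0 : pdm α β (gradXi φ) x ξ j = cmp j (pdm α β (gradXi φ)) x ξ := rfl
  rw [h0, ← pdm_cmp (smooth2_gradXi h)]
  have h1 : cmp j (gradXi φ) = pd2 j φ := rfl
  rw [h1, pdm_pd2 h]

lemma key2 (h : Smooth2 φ) (α β : Fin d → ℕ) (j : Fin d) (X H : Vd d) :
    pdm α β (sw (gradX φ)) X H j = pdm ((β + Pi.single j 1 : Fin d → ℕ)) α φ H X := by
  have h0 : pdm α β (sw (gradX φ)) X H j = cmp j (pdm α β (sw (gradX φ))) X H := rfl
  rw [h0, ← pdm_cmp (smooth2_sw (smooth2_gradX h))]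
  have h1 : cmp j (sw (gradX φ)) = sw (pd1 j φ) := rfl
  rw [h1, pdm_sw (smooth2_pd1 h j)]
  show pdm β α (pd1 j φ) H X = _
  rw [pdm_pd1 h]

end Analysis

end SG3
section Main
variable {d : ℕ}

open SG3 in
lemma sgmap_gradXi {φ : Vd d → Vd d → ℝ} (hsm : Smooth2 φ)
    (hbd : ∀ α β : Fin d → ℕ, ∃ C : ℝ, 0 < C ∧ ∀ x ξ,
      ‖pdm α β φ x ξ‖ ≤ C * vth 1 1 x ξ * jb x ^ (-(1 * mOrd α)) * jb ξ ^ (-(1 * mOrd β)))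
    (hXi : ∃ c C : ℝ, 0 < c ∧ ∀ x ξ, c * jb x ≤ jb (gradXi φ x ξ) ∧ jb (gradXi φ x ξ) ≤ C * jb x) :
    IsSGMap d (gradXi φ) := by
  refine ⟨smooth2_gradXi hsm, hXi, ?_⟩
  intro α β
  have hex : ∀ j : Fin d, ∃ C : ℝ, 0 < C ∧
      ∀ x ξ, ‖pdm α ((β + Pi.single j 1 : Fin d → ℕ)) φ x ξ‖ ≤
        C * vth 1 1 x ξ *
          jb x ^ (-(1 * mOrd α)) * jb ξ ^ (-(1 * mOrd ((β + Pi.single j 1 : Fin d → ℕ)))) :=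
    fun j => hbd α ((β + Pi.single j 1 : Fin d → ℕ))
  choose Cf hpos hbnd using hex
  have hsum : (0:ℝ) ≤ ∑ j, Cf j := Finset.sum_nonneg fun j _ => le_of_lt (hpos j)
  refine ⟨1 + ∑ j, Cf j, by linarith, ?_⟩
  intro x ξ
  have hrx : (0:ℝ) < jb x ^ (1 - mOrd α) := Real.rpow_pos_of_pos (jb_pos x) _
  have hrξ : (0:ℝ) < jb ξ ^ (-(mOrd β)) := Real.rpow_pos_of_pos (jb_pos ξ) _
  rw [pi_norm_le_iff_of_nonneg (by positivity)]
  intro j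
  have hk : pdm α β (gradXi φ) x ξ j = pdm α ((β + Pi.single j 1 : Fin d → ℕ)) φ x ξ :=
    key1 hsm α β j x ξ
  rw [hk]
  have hb := hbnd j x ξ
  rw [mOrd_single β j, est x ξ] at hb
  refine hb.trans ?_
  have hCle : Cf j ≤ 1 + ∑ i, Cf i := by
    have h1 : Cf j ≤ ∑ i, Cf i :=
      Finset.single_le_sum (fun i _ => le_of_lt (hpos i)) (Finset.mem_univ j)
    linarith
  calc Cf j * jb x ^ (1 - mOrd α) * jb ξ ^ (-(mOrd β))
      ≤ (1 + ∑ i, Cf i) * jb x ^ (1 - mOrd α) * jb ξ ^ (-(mOrd β)) := by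
        have := mul_le_mul_of_nonneg_right (mul_le_mul_of_nonneg_right hCle hrx.le) hrξ.le
        exact this
    _ = _ := rfl

open SG3 in
lemma sgmap_gradX {φ : Vd d → Vd d → ℝ} (hsm : Smooth2 φ)
    (hbd : ∀ α β : Fin d → ℕ, ∃ C : ℝ, 0 < C ∧ ∀ x ξ,
      ‖pdm α β φ x ξ‖ ≤ C * vth 1 1 x ξ * jb x ^ (-(1 * mOrd α)) * jb ξ ^ (-(1 * mOrd β)))
    (hX : ∃ c C : ℝ, 0 < c ∧ ∀ x ξ, c * jb ξ ≤ jb (gradX φ x ξ) ∧ jb (gradX φ x ξ) ≤ C * jb ξ) :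
    IsSGMap d (sw (gradX φ)) := by
  refine ⟨smooth2_sw (smooth2_gradX hsm), ?_, ?_⟩
  · obtain ⟨c, C, hc, h⟩ := hX
    exact ⟨c, C, hc, fun x η => h η x⟩
  intro α β
  have hex : ∀ j : Fin d, ∃ C : ℝ, 0 < C ∧
      ∀ x ξ, ‖pdm ((β + Pi.single j 1 : Fin d → ℕ)) α φ x ξ‖ ≤
        C * vth 1 1 x ξ *
          jb x ^ (-(1 * mOrd ((β + Pi.single j 1 : Fin d → ℕ)))) * jb ξ ^ (-(1 * mOrd α)) :=
    fun j => hbd ((β + Pi.single j 1 : Fin d → ℕ)) α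
  choose Cf hpos hbnd using hex
  have hsum : (0:ℝ) ≤ ∑ j, Cf j := Finset.sum_nonneg fun j _ => le_of_lt (hpos j)
  refine ⟨1 + ∑ j, Cf j, by linarith, ?_⟩
  intro X H
  have hrx : (0:ℝ) < jb X ^ (1 - mOrd α) := Real.rpow_pos_of_pos (jb_pos X) _
  have hrξ : (0:ℝ) < jb H ^ (-(mOrd β)) := Real.rpow_pos_of_pos (jb_pos H) _
  rw [pi_norm_le_iff_of_nonneg (by positivity)]
  intro j
  have hk : pdm α β (sw (gradX φ)) X H j = pdm ((β + Pi.single j 1 : Fin d → ℕ)) α φ H X :=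
    key2 hsm α β j X H
  rw [hk]
  have hb := hbnd j H X
  rw [mOrd_single β j, est2 H X] at hb
  refine hb.trans ?_
  have hCle : Cf j ≤ 1 + ∑ i, Cf i := by
    have h1 : Cf j ≤ ∑ i, Cf i :=
      Finset.single_le_sum (fun i _ => le_of_lt (hpos i)) (Finset.mem_univ j)
    linarith
  calc Cf j * jb X ^ (1 - mOrd α) * jb H ^ (-(mOrd β))
      ≤ (1 + ∑ i, Cf i) * jb X ^ (1 - mOrd α) * jb H ^ (-(mOrd β)) := by
        exact mul_le_mul_of_nonneg_right (mul_le_mul_of_nonneg_right hCle hrx.le) hrξ.le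
    _ = _ := rfl

end Main

/-- Proposition (the gradients of a simple phase are SG maps; for regular phases,
SG diffeomorphisms) with SG⁰ parameter dependence. -/
theorem statement3 (d : ℕ) (φ : Vd d → Vd d → ℝ) (hφ : IsSimplePhase φ) :
    (IsSGMap d (fun x ξ => gradXi φ x ξ) ∧ IsSGMap d (fun ξ x => gradX φ x ξ)) ∧
    (IsRegularPhase φ →
      IsSGDiffeo d (fun x ξ => gradXi φ x ξ) ∧ IsSGDiffeo d (fun ξ x => gradX φ x ξ)) := by
  obtain ⟨⟨hsm, hbd⟩, hXi, hX⟩ := hφ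
  have hmap1 : IsSGMap d (gradXi φ) := sgmap_gradXi hsm hbd hXi
  have hmap2 : IsSGMap d (SG3.sw (gradX φ)) := sgmap_gradX hsm hbd hX
  refine ⟨⟨hmap1, hmap2⟩, ?_⟩
  rintro ⟨-, c, hc, hdet⟩
  constructor
  · refine ⟨hmap1, c, hc, ?_⟩
    intro x η
    have hjac : jacX (fun x ξ => gradXi φ x ξ) x η = (mixedHess φ x η).transpose := by
      ext j k
      show pd1 k (pd2 j φ) x η = (mixedHess φ x η).transpose j k
      rw [SG3.pd1_pd2_comm hsm k j]
      rfl
    rw [hjac, Matrix.det_transpose]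
    exact hdet x η
  · refine ⟨hmap2, c, hc, ?_⟩
    intro X H
    have hjac : jacX (fun ξ x => gradX φ x ξ) X H = mixedHess φ H X := rfl
    rw [hjac]
    exact hdet H X
end

section
/- Let φ ∈ SG^{1,1}_{1,1}(ℝ^{2d}) be real-valued and let ψ(x,y,ξ) = φ(y,ξ) − φ(x,ξ) − ⟨y−x, φ'_x(x,ξ)⟩. Then for every multi-index α with |α| ≥ 1, the function (x,ξ) ↦ (∂_y^α e^{iψ(x,y,ξ)})|_{y=x} satisfies the SG estimates of order (−|α|/2, |α|/2): for all multi-indices β, γ, |∂_x^β ∂_ξ^γ ( (∂_y^α e^{iψ(x,y,ξ)})|_{y=x} )| ≲ ⟨x⟩^{−|α|/2−|β|} ⟨ξ⟩^{|α|/2−|γ|} on ℝ^{2d}. -/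
open MeasureTheory Real

/-! ### Auxiliary development for `statement9` -/

noncomputable section S9Aux

namespace S9

set_option linter.unusedSectionVars false

variable {d : ℕ} {F : Type*} [NormedAddCommGroup F] [NormedSpace ℝ F]

/-- The joint function. -/
def jf (f : Vd d → Vd d → F) : Vd d × Vd d → F := fun p => f p.1 p.2

/-- Directional derivative in the joint variables. -/
def pdv (v : Vd d × Vd d) (f : Vd d → Vd d → F) : Vd d → Vd d → F :=
  fun x ξ => fderiv ℝ (jf f) (x, ξ) v

lemma smooth2_iff {f : Vd d → Vd d → F} : Smooth2 f ↔ ContDiff ℝ (⊤ : ℕ∞) (jf f) := Iff.rfl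

lemma smooth2_diff1 {f : Vd d → Vd d → F} (hf : Smooth2 f) (ξ : Vd d) :
    Differentiable ℝ (fun y => f y ξ) := by
  have : ContDiff ℝ (⊤ : ℕ∞) (fun y : Vd d => jf f (y, ξ)) :=
    (smooth2_iff.1 hf).comp (contDiff_id.prodMk contDiff_const)
  exact this.differentiable (by simp)

lemma smooth2_diff2 {f : Vd d → Vd d → F} (hf : Smooth2 f) (x : Vd d) :
    Differentiable ℝ (fun η => f x η) := by
  have : ContDiff ℝ (⊤ : ℕ∞) (fun η : Vd d => jf f (x, η)) :=
    (smooth2_iff.1 hf).comp (contDiff_const.prodMk contDiff_id)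
  exact this.differentiable (by simp)

lemma hasFDerivAt_sect1 {f : Vd d → Vd d → F} (hf : Smooth2 f) (x ξ : Vd d) :
    HasFDerivAt (fun y => f y ξ)
      ((fderiv ℝ (jf f) (x, ξ)).comp (ContinuousLinearMap.inl ℝ (Vd d) (Vd d))) x :=
  HasFDerivAt.comp (f := fun e : Vd d => (e, ξ)) x
    (((smooth2_iff.1 hf).differentiable (by simp) (x, ξ)).hasFDerivAt)
    (hasFDerivAt_prodMk_left x ξ)

lemma hasFDerivAt_sect2 {f : Vd d → Vd d → F} (hf : Smooth2 f) (x ξ : Vd d) :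
    HasFDerivAt (fun η => f x η)
      ((fderiv ℝ (jf f) (x, ξ)).comp (ContinuousLinearMap.inr ℝ (Vd d) (Vd d))) ξ :=
  HasFDerivAt.comp (f := fun e : Vd d => (x, e)) ξ
    (((smooth2_iff.1 hf).differentiable (by simp) (x, ξ)).hasFDerivAt)
    (hasFDerivAt_prodMk_right x ξ)

lemma pd1_eq_pdv {f : Vd d → Vd d → F} (hf : Smooth2 f) (j : Fin d) :
    pd1 j f = pdv (Pi.single j 1, 0) f := by
  funext x ξ
  have h := (hasFDerivAt_sect1 hf x ξ).fderiv
  show fderiv ℝ (fun y => f y ξ) x (Pi.single j 1) = _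
  rw [h]
  rfl

lemma pd2_eq_pdv {f : Vd d → Vd d → F} (hf : Smooth2 f) (j : Fin d) :
    pd2 j f = pdv (0, Pi.single j 1) f := by
  funext x ξ
  have h := (hasFDerivAt_sect2 hf x ξ).fderiv
  show fderiv ℝ (fun η => f x η) ξ (Pi.single j 1) = _
  rw [h]
  rfl

lemma jf_pdv {f : Vd d → Vd d → F} (v : Vd d × Vd d) :
    jf (pdv v f) = fun p => fderiv ℝ (jf f) p v := rfl

lemma smooth2_pdv {f : Vd d → Vd d → F} (hf : Smooth2 f) (v : Vd d × Vd d) :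
    Smooth2 (pdv v f) := by
  rw [smooth2_iff, jf_pdv]
  exact ((smooth2_iff.1 hf).fderiv_right (by simp)).clm_apply contDiff_const

lemma smooth2_pd1 {f : Vd d → Vd d → F} (hf : Smooth2 f) (j : Fin d) :
    Smooth2 (pd1 j f) := by
  rw [pd1_eq_pdv hf]; exact smooth2_pdv hf _

lemma smooth2_pd2 {f : Vd d → Vd d → F} (hf : Smooth2 f) (j : Fin d) :
    Smooth2 (pd2 j f) := by
  rw [pd2_eq_pdv hf]; exact smooth2_pdv hf _

lemma pdv_comm {f : Vd d → Vd d → F} (hf : Smooth2 f) (v w : Vd d × Vd d) :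
    pdv v (pdv w f) = pdv w (pdv v f) := by
  have hsm := smooth2_iff.1 hf
  have hd1 : Differentiable ℝ (jf f) := hsm.differentiable (by simp)
  have hd2 : Differentiable ℝ (fderiv ℝ (jf f)) :=
    (hsm.fderiv_right (m := (⊤ : ℕ∞)) (n := (⊤ : ℕ∞)) (by simp)).differentiable (by simp)
  funext x ξ
  have key : ∀ u u' : Vd d × Vd d,
      pdv u (pdv u' f) x ξ = fderiv ℝ (fderiv ℝ (jf f)) (x, ξ) u u' := by
    intro u u'
    show fderiv ℝ (jf (pdv u' f)) (x, ξ) u = _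
    rw [jf_pdv]
    have hc : HasFDerivAt (fderiv ℝ (jf f)) (fderiv ℝ (fderiv ℝ (jf f)) (x, ξ)) (x, ξ) :=
      (hd2 (x, ξ)).hasFDerivAt
    have hu : HasFDerivAt (fun _ : Vd d × Vd d => u') (0 : (Vd d × Vd d) →L[ℝ] (Vd d × Vd d))
        (x, ξ) := hasFDerivAt_const _ _
    have := (hc.clm_apply hu).fderiv
    rw [this]
    simp
  rw [key v w, key w v]
  exact second_derivative_symmetric (fun y => (hd1 y).hasFDerivAt)
    ((hd2 (x, ξ)).hasFDerivAt) v w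

lemma pd1_comm {f : Vd d → Vd d → F} (hf : Smooth2 f) (j k : Fin d) :
    pd1 j (pd1 k f) = pd1 k (pd1 j f) := by
  rw [pd1_eq_pdv hf k, pd1_eq_pdv hf j, pd1_eq_pdv (smooth2_pdv hf _) j, pd1_eq_pdv (smooth2_pdv hf _) k]
  exact pdv_comm hf _ _

lemma pd1_pd2_comm {f : Vd d → Vd d → F} (hf : Smooth2 f) (j k : Fin d) :
    pd1 j (pd2 k f) = pd2 k (pd1 j f) := by
  rw [pd2_eq_pdv hf k, pd1_eq_pdv hf j, pd1_eq_pdv (smooth2_pdv hf _) j, pd2_eq_pdv (smooth2_pdv hf _) k]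
  exact pdv_comm hf _ _

lemma pd2_comm {f : Vd d → Vd d → F} (hf : Smooth2 f) (j k : Fin d) :
    pd2 j (pd2 k f) = pd2 k (pd2 j f) := by
  rw [pd2_eq_pdv hf k, pd2_eq_pdv hf j, pd2_eq_pdv (smooth2_pdv hf _) j, pd2_eq_pdv (smooth2_pdv hf _) k]
  exact pdv_comm hf _ _

/-! #### Pointwise differentiation rules -/

lemma pd1_add {f g : Vd d → Vd d → F} (hf : Smooth2 f) (hg : Smooth2 g) (j : Fin d) :
    pd1 j (f + g) = pd1 j f + pd1 j g := by
  funext x ξ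
  show fderiv ℝ (fun y => (f + g) y ξ) x (Pi.single j 1) = _
  simp only [Pi.add_apply]
  rw [fderiv_fun_add (smooth2_diff1 hf ξ x) (smooth2_diff1 hg ξ x)]
  rfl

lemma pd2_add {f g : Vd d → Vd d → F} (hf : Smooth2 f) (hg : Smooth2 g) (j : Fin d) :
    pd2 j (f + g) = pd2 j f + pd2 j g := by
  funext x ξ
  show fderiv ℝ (fun η => (f + g) x η) ξ (Pi.single j 1) = _
  simp only [Pi.add_apply]
  rw [fderiv_fun_add (smooth2_diff2 hf x ξ) (smooth2_diff2 hg x ξ)]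
  rfl

lemma pd1_const (c : F) (j : Fin d) : pd1 j (fun _ _ => c) = 0 := by
  funext x ξ
  show fderiv ℝ (fun _ => c) x (Pi.single j 1) = 0
  simp

lemma pd2_const (c : F) (j : Fin d) : pd2 j (fun _ _ => c) = 0 := by
  funext x ξ
  show fderiv ℝ (fun _ => c) ξ (Pi.single j 1) = 0
  simp

lemma pd1_zero_fn (j : Fin d) : pd1 j (0 : Vd d → Vd d → F) = 0 := pd1_const 0 j

lemma pd2_zero_fn (j : Fin d) : pd2 j (0 : Vd d → Vd d → F) = 0 := pd2_const 0 j

lemma pd1_mul {f g : Vd d → Vd d → ℂ} (hf : Smooth2 f) (hg : Smooth2 g) (j : Fin d) :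
    pd1 j (f * g) = pd1 j f * g + f * pd1 j g := by
  funext x ξ
  show fderiv ℝ (fun y => (f * g) y ξ) x (Pi.single j 1) = _
  simp only [Pi.mul_apply]
  rw [fderiv_fun_mul (smooth2_diff1 hf ξ x) (smooth2_diff1 hg ξ x)]
  show f x ξ * fderiv ℝ (fun y => g y ξ) x (Pi.single j 1)
      + g x ξ * fderiv ℝ (fun y => f y ξ) x (Pi.single j 1) = _
  show _ = pd1 j f x ξ * g x ξ + f x ξ * pd1 j g x ξ
  unfold pd1
  ring

lemma pd1_coe {f : Vd d → Vd d → ℝ} (hf : Smooth2 f) (j : Fin d) :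
    pd1 j (fun x ξ => ((f x ξ : ℝ) : ℂ)) = fun x ξ => ((pd1 j f x ξ : ℝ) : ℂ) := by
  funext x ξ
  have h : HasFDerivAt (fun y => ((f y ξ : ℝ) : ℂ))
      (Complex.ofRealCLM.comp (fderiv ℝ (fun y => f y ξ) x)) x :=
    (Complex.ofRealCLM.hasFDerivAt).comp x (smooth2_diff1 hf ξ x).hasFDerivAt
  show fderiv ℝ (fun y => ((f y ξ : ℝ) : ℂ)) x (Pi.single j 1) = _
  rw [h.fderiv]
  rfl

lemma pd2_coe {f : Vd d → Vd d → ℝ} (hf : Smooth2 f) (j : Fin d) :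
    pd2 j (fun x ξ => ((f x ξ : ℝ) : ℂ)) = fun x ξ => ((pd2 j f x ξ : ℝ) : ℂ) := by
  funext x ξ
  have h : HasFDerivAt (fun η => ((f x η : ℝ) : ℂ))
      (Complex.ofRealCLM.comp (fderiv ℝ (fun η => f x η) ξ)) ξ :=
    (Complex.ofRealCLM.hasFDerivAt).comp ξ (smooth2_diff2 hf x ξ).hasFDerivAt
  show fderiv ℝ (fun η => ((f x η : ℝ) : ℂ)) ξ (Pi.single j 1) = _
  rw [h.fderiv]
  rfl

lemma pd1_cexp {f : Vd d → Vd d → ℂ} (hf : Smooth2 f) (j : Fin d) :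
    pd1 j (fun x ξ => Complex.exp (f x ξ))
      = fun x ξ => Complex.exp (f x ξ) * pd1 j f x ξ := by
  funext x ξ
  have h := ((smooth2_diff1 hf ξ x).hasFDerivAt).cexp
  show fderiv ℝ (fun y => Complex.exp (f y ξ)) x (Pi.single j 1) = _
  rw [h.fderiv]
  simp [smul_eq_mul]
  rfl

lemma pd1_constMul {g : Vd d → Vd d → ℂ} (hg : Smooth2 g) (c : ℂ) (j : Fin d) :
    pd1 j ((fun _ _ => c) * g) = (fun _ _ => c) * pd1 j g := by
  have hc : Smooth2 (fun _ _ : Vd d => c) := contDiff_const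
  rw [pd1_mul hc hg, pd1_const]
  funext x ξ
  simp

lemma pd2_mul {f g : Vd d → Vd d → ℂ} (hf : Smooth2 f) (hg : Smooth2 g) (j : Fin d) :
    pd2 j (f * g) = pd2 j f * g + f * pd2 j g := by
  funext x ξ
  show fderiv ℝ (fun η => (f * g) x η) ξ (Pi.single j 1) = _
  simp only [Pi.mul_apply]
  rw [fderiv_fun_mul (smooth2_diff2 hf x ξ) (smooth2_diff2 hg x ξ)]
  show f x ξ * fderiv ℝ (fun η => g x η) ξ (Pi.single j 1)
      + g x ξ * fderiv ℝ (fun η => f x η) ξ (Pi.single j 1) = _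
  show _ = pd2 j f x ξ * g x ξ + f x ξ * pd2 j g x ξ
  unfold pd2
  ring

/-! #### Smoothness closure -/

lemma smooth2_const (c : F) : Smooth2 (fun _ _ : Vd d => c) := contDiff_const

lemma smooth2_zero : Smooth2 (0 : Vd d → Vd d → F) := contDiff_const

lemma smooth2_add {f g : Vd d → Vd d → F} (hf : Smooth2 f) (hg : Smooth2 g) :
    Smooth2 (f + g) := ContDiff.add hf hg

lemma smooth2_mul {f g : Vd d → Vd d → ℂ} (hf : Smooth2 f) (hg : Smooth2 g) :
    Smooth2 (f * g) := ContDiff.mul hf hg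

lemma smooth2_coe {f : Vd d → Vd d → ℝ} (hf : Smooth2 f) :
    Smooth2 (fun x ξ => ((f x ξ : ℝ) : ℂ)) :=
  Complex.ofRealCLM.contDiff.comp hf

lemma smooth2_cexp {f : Vd d → Vd d → ℂ} (hf : Smooth2 f) :
    Smooth2 (fun x ξ => Complex.exp (f x ξ)) :=
  Complex.contDiff_exp.comp hf

/-! #### Generic fold machinery -/

section Fold

variable {G : Type*} [NormedAddCommGroup G] [NormedSpace ℝ G]
variable (T : Fin d → (Vd d → Vd d → F) → (Vd d → Vd d → F))
variable (T' : Fin d → (Vd d → Vd d → G) → (Vd d → Vd d → G))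

/-- The generic multi-index fold. -/
def foldT (α : Fin d → ℕ) (l : List (Fin d)) (f : Vd d → Vd d → F) : Vd d → Vd d → F :=
  l.foldr (fun j g => (T j)^[α j] g) f

lemma foldT_nil (α : Fin d → ℕ) (f : Vd d → Vd d → F) : foldT T α [] f = f := rfl

lemma foldT_cons (α : Fin d → ℕ) (k : Fin d) (t : List (Fin d)) (f : Vd d → Vd d → F) :
    foldT T α (k :: t) f = (T k)^[α k] (foldT T α t f) := rfl

section Smooth

variable (hS : ∀ (j : Fin d) (g : Vd d → Vd d → F), Smooth2 g → Smooth2 (T j g))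

include hS

lemma iterT_smooth {f : Vd d → Vd d → F} (hf : Smooth2 f) (j : Fin d) (n : ℕ) :
    Smooth2 ((T j)^[n] f) := by
  induction n with
  | zero => simpa using hf
  | succ n ih => rw [Function.iterate_succ_apply']; exact hS j _ ih

lemma foldT_smooth {f : Vd d → Vd d → F} (hf : Smooth2 f) (α : Fin d → ℕ) (l : List (Fin d)) :
    Smooth2 (foldT T α l f) := by
  induction l with
  | nil => exact hf
  | cons k t ih => rw [foldT_cons]; exact iterT_smooth T hS ih k (α k)

variable (U : (Vd d → Vd d → F) → (Vd d → Vd d → G))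
variable (hC : ∀ (j : Fin d) (g : Vd d → Vd d → F), Smooth2 g → U (T j g) = T' j (U g))

include hC

lemma U_iterT {f : Vd d → Vd d → F} (hf : Smooth2 f) (j : Fin d) (n : ℕ) :
    U ((T j)^[n] f) = (T' j)^[n] (U f) := by
  induction n with
  | zero => simp
  | succ n ih =>
    rw [Function.iterate_succ_apply', Function.iterate_succ_apply',
      hC j _ (iterT_smooth T hS hf j n), ih]

lemma U_foldT {f : Vd d → Vd d → F} (hf : Smooth2 f) (α : Fin d → ℕ) (l : List (Fin d)) :
    U (foldT T α l f) = foldT T' α l (U f) := by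
  induction l with
  | nil => rfl
  | cons k t ih =>
    rw [foldT_cons, foldT_cons, U_iterT T T' hS U hC (foldT_smooth T hS hf α t), ih]

end Smooth

lemma foldT_congr {α α' : Fin d → ℕ} {l : List (Fin d)} (h : ∀ k ∈ l, α k = α' k)
    (f : Vd d → Vd d → F) : foldT T α l f = foldT T α' l f := by
  induction l with
  | nil => rfl
  | cons k t ih =>
    rw [foldT_cons, foldT_cons, h k List.mem_cons_self,
      ih (fun m hm => h m (List.mem_cons_of_mem k hm))]

lemma foldT_zero_exp {l : List (Fin d)} (f : Vd d → Vd d → F) :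
    foldT T (0 : Fin d → ℕ) l f = f := by
  induction l with
  | nil => rfl
  | cons k t ih => rw [foldT_cons, ih]; rfl

lemma iterT_zero_fn (hZ : ∀ j : Fin d, T j 0 = 0) (j : Fin d) (n : ℕ) :
    (T j)^[n] (0 : Vd d → Vd d → F) = 0 := by
  induction n with
  | zero => rfl
  | succ n ih => rw [Function.iterate_succ_apply', ih, hZ]

lemma foldT_zero_fn (hZ : ∀ j : Fin d, T j 0 = 0) (α : Fin d → ℕ) (l : List (Fin d)) :
    foldT T α l (0 : Vd d → Vd d → F) = 0 := by
  induction l with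
  | nil => rfl
  | cons k t ih => rw [foldT_cons, ih, iterT_zero_fn T hZ]

section AddSingle

variable (hS : ∀ (j : Fin d) (g : Vd d → Vd d → F), Smooth2 g → Smooth2 (T j g))
variable (hcomm : ∀ (j k : Fin d) (g : Vd d → Vd d → F), Smooth2 g →
  T j (T k g) = T k (T j g))

include hS hcomm

lemma foldT_add_single {α : Fin d → ℕ} {l : List (Fin d)} (hnd : l.Nodup) {j : Fin d}
    (hj : j ∈ l) {f : Vd d → Vd d → F} (hf : Smooth2 f) :
    foldT T (α + Pi.single j 1) l f = foldT T α l (T j f) ∧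
    foldT T (α + Pi.single j 1) l f = T j (foldT T α l f) := by
  induction l with
  | nil => simp at hj
  | cons k t ih =>
    rcases List.nodup_cons.1 hnd with ⟨hkt, hndt⟩
    by_cases hkj : k = j
    · subst hkj
      have ht : foldT T (α + Pi.single k 1) t f = foldT T α t f :=
        foldT_congr T (fun m hm => by
          have hmk : m ≠ k := fun h => hkt (h ▸ hm)
          simp [Pi.single_eq_of_ne hmk]) f
      have hαk : (α + Pi.single k 1 : Fin d → ℕ) k = α k + 1 := by simp
      constructor
      · rw [foldT_cons, foldT_cons, ht, hαk, Function.iterate_succ_apply]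
        congr 1
        exact U_foldT T T hS (T k) (fun j g hg => hcomm k j g hg) hf α t
      · rw [foldT_cons, foldT_cons, ht, hαk, Function.iterate_succ_apply']
    · have hjt : j ∈ t := by
        rcases List.mem_cons.1 hj with h | h
        · exact absurd h.symm hkj
        · exact h
      have hαk : (α + Pi.single j 1 : Fin d → ℕ) k = α k := by
        simp [Pi.single_eq_of_ne hkj]
      obtain ⟨ih1, ih2⟩ := ih hndt hjt
      constructor
      · rw [foldT_cons, foldT_cons, hαk, ih1]
      · rw [foldT_cons, foldT_cons, hαk, ih2]
        exact (U_iterT T T hS (T j) (fun m g hg => hcomm j m g hg)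
          (foldT_smooth T hS hf α t) k (α k)).symm

end AddSingle

section AddFun

variable (hS : ∀ (j : Fin d) (g : Vd d → Vd d → F), Smooth2 g → Smooth2 (T j g))
variable (hA : ∀ (j : Fin d) (g h : Vd d → Vd d → F), Smooth2 g → Smooth2 h →
  T j (g + h) = T j g + T j h)

include hS hA

lemma iterT_add {f g : Vd d → Vd d → F} (hf : Smooth2 f) (hg : Smooth2 g) (j : Fin d)
    (n : ℕ) : (T j)^[n] (f + g) = (T j)^[n] f + (T j)^[n] g := by
  induction n with
  | zero => rfl
  | succ n ih =>
    rw [Function.iterate_succ_apply', Function.iterate_succ_apply',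
      Function.iterate_succ_apply', ih,
      hA j _ _ (iterT_smooth T hS hf j n) (iterT_smooth T hS hg j n)]

lemma foldT_add {f g : Vd d → Vd d → F} (hf : Smooth2 f) (hg : Smooth2 g) (α : Fin d → ℕ)
    (l : List (Fin d)) : foldT T α l (f + g) = foldT T α l f + foldT T α l g := by
  induction l with
  | nil => rfl
  | cons k t ih =>
    rw [foldT_cons, foldT_cons, foldT_cons, ih,
      iterT_add T hS hA (foldT_smooth T hS hf α t) (foldT_smooth T hS hg α t)]

end AddFun

end Fold

/-! #### Multi-index arithmetic -/

lemma mAbs_add (pp ρ : Fin d → ℕ) : mAbs (pp + ρ) = mAbs pp + mAbs ρ := by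
  simp [mAbs, Finset.sum_add_distrib]

lemma mAbs_single (j : Fin d) : mAbs (Pi.single j 1 : Fin d → ℕ) = 1 := by
  simp [mAbs]

lemma mAbs_zero : mAbs (0 : Fin d → ℕ) = 0 := by simp [mAbs]

lemma mOrd_natCast (pp : Fin d → ℕ) : mOrd pp = (mAbs pp : ℝ) := by
  simp [mOrd, mAbs]

lemma mAbs_eq_zero {pp : Fin d → ℕ} (h : mAbs pp = 0) : pp = 0 := by
  funext k
  have := (Finset.sum_eq_zero_iff).1 h k (Finset.mem_univ k)
  simpa using this

lemma split_exists {pp : Fin d → ℕ} (h : pp ≠ 0) :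
    ∃ (j : Fin d) (pp' : Fin d → ℕ), pp = pp' + Pi.single j 1 ∧ mAbs pp' + 1 = mAbs pp := by
  have h1 : ∃ j, pp j ≠ 0 := by
    by_contra hc
    push_neg at hc
    exact h (funext fun k => hc k)
  obtain ⟨j, hj⟩ := h1
  refine ⟨j, Function.update pp j (pp j - 1), ?_, ?_⟩
  · funext k
    by_cases hk : k = j
    · subst hk
      simp [Function.update_self, Nat.sub_add_cancel (Nat.pos_of_ne_zero hj)]
    · simp [Function.update_of_ne hk, Pi.single_eq_of_ne hk]
  · have : pp = Function.update pp j (pp j - 1) + Pi.single j 1 := by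
      funext k
      by_cases hk : k = j
      · subst hk
        simp [Function.update_self, Nat.sub_add_cancel (Nat.pos_of_ne_zero hj)]
      · simp [Function.update_of_ne hk, Pi.single_eq_of_ne hk]
    conv_rhs => rw [this]
    rw [mAbs_add, mAbs_single]

/-! #### Multi-index derivative lemmas -/

section Pdm

variable {f g : Vd d → Vd d → F}

lemma hS1 : ∀ (j : Fin d) (g : Vd d → Vd d → F), Smooth2 g → Smooth2 (pd1 j g) :=
  fun j g hg => smooth2_pd1 hg j

lemma hS2 : ∀ (j : Fin d) (g : Vd d → Vd d → F), Smooth2 g → Smooth2 (pd2 j g) :=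
  fun j g hg => smooth2_pd2 hg j

lemma pdm1_eq_foldT (α : Fin d → ℕ) (f : Vd d → Vd d → F) :
    pdm1 α f = foldT (fun j => pd1 j) α (List.finRange d) f := rfl

lemma pdm2_eq_foldT (α : Fin d → ℕ) (f : Vd d → Vd d → F) :
    pdm2 α f = foldT (fun j => pd2 j) α (List.finRange d) f := rfl

lemma smooth2_pdm1 (hf : Smooth2 f) (α : Fin d → ℕ) : Smooth2 (pdm1 α f) :=
  foldT_smooth _ hS1 hf α _

lemma smooth2_pdm2 (hf : Smooth2 f) (α : Fin d → ℕ) : Smooth2 (pdm2 α f) :=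
  foldT_smooth _ hS2 hf α _

lemma smooth2_pdm (hf : Smooth2 f) (α β : Fin d → ℕ) : Smooth2 (pdm α β f) :=
  smooth2_pdm1 (smooth2_pdm2 hf β) α

lemma pdm1_zero_idx (f : Vd d → Vd d → F) : pdm1 (0 : Fin d → ℕ) f = f :=
  foldT_zero_exp _ f

lemma pdm2_zero_idx (f : Vd d → Vd d → F) : pdm2 (0 : Fin d → ℕ) f = f :=
  foldT_zero_exp _ f

lemma pdm_zero_idx (f : Vd d → Vd d → F) : pdm (0 : Fin d → ℕ) 0 f = f := by
  unfold pdm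
  rw [pdm2_zero_idx, pdm1_zero_idx]

lemma pdm1_zero_fn (α : Fin d → ℕ) : pdm1 α (0 : Vd d → Vd d → F) = 0 :=
  foldT_zero_fn _ (fun j => pd1_zero_fn j) α _

lemma pdm2_zero_fn (α : Fin d → ℕ) : pdm2 α (0 : Vd d → Vd d → F) = 0 :=
  foldT_zero_fn _ (fun j => pd2_zero_fn j) α _

lemma pdm_zero_fn (α β : Fin d → ℕ) : pdm α β (0 : Vd d → Vd d → F) = 0 := by
  unfold pdm
  rw [pdm2_zero_fn, pdm1_zero_fn]

lemma pdm1_add (hf : Smooth2 f) (hg : Smooth2 g) (α : Fin d → ℕ) :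
    pdm1 α (f + g) = pdm1 α f + pdm1 α g :=
  foldT_add _ hS1 (fun j a b ha hb => pd1_add ha hb j) hf hg α _

lemma pdm2_add (hf : Smooth2 f) (hg : Smooth2 g) (α : Fin d → ℕ) :
    pdm2 α (f + g) = pdm2 α f + pdm2 α g :=
  foldT_add _ hS2 (fun j a b ha hb => pd2_add ha hb j) hf hg α _

lemma pdm_add (hf : Smooth2 f) (hg : Smooth2 g) (α β : Fin d → ℕ) :
    pdm α β (f + g) = pdm α β f + pdm α β g := by
  unfold pdm
  rw [pdm2_add hf hg, pdm1_add (smooth2_pdm2 hf β) (smooth2_pdm2 hg β)]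

lemma pdm1_add_single_in (hf : Smooth2 f) (α : Fin d → ℕ) (j : Fin d) :
    pdm1 (α + Pi.single j 1) f = pdm1 α (pd1 j f) :=
  (foldT_add_single _ hS1 (fun a b c hc => pd1_comm hc a b)
    (List.nodup_finRange d) (List.mem_finRange j) hf).1

lemma pdm1_add_single_out (hf : Smooth2 f) (α : Fin d → ℕ) (j : Fin d) :
    pdm1 (α + Pi.single j 1) f = pd1 j (pdm1 α f) :=
  (foldT_add_single _ hS1 (fun a b c hc => pd1_comm hc a b)
    (List.nodup_finRange d) (List.mem_finRange j) hf).2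

lemma pdm2_add_single_in (hf : Smooth2 f) (α : Fin d → ℕ) (j : Fin d) :
    pdm2 (α + Pi.single j 1) f = pdm2 α (pd2 j f) :=
  (foldT_add_single _ hS2 (fun a b c hc => pd2_comm hc a b)
    (List.nodup_finRange d) (List.mem_finRange j) hf).1

lemma pdm2_add_single_out (hf : Smooth2 f) (α : Fin d → ℕ) (j : Fin d) :
    pdm2 (α + Pi.single j 1) f = pd2 j (pdm2 α f) :=
  (foldT_add_single _ hS2 (fun a b c hc => pd2_comm hc a b)
    (List.nodup_finRange d) (List.mem_finRange j) hf).2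

lemma pdm1_single (hf : Smooth2 f) (j : Fin d) : pdm1 (Pi.single j 1) f = pd1 j f := by
  have h := pdm1_add_single_in hf 0 j
  rw [zero_add] at h
  rw [h, pdm1_zero_idx]

lemma pdm2_pd1 (hf : Smooth2 f) (γ : Fin d → ℕ) (j : Fin d) :
    pdm2 γ (pd1 j f) = pd1 j (pdm2 γ f) :=
  (U_foldT (fun k => pd2 k) (fun k => pd2 k) hS2 (pd1 j)
    (fun k g hg => pd1_pd2_comm hg j k) hf γ _).symm

lemma pdm1_pd2 (hf : Smooth2 f) (α : Fin d → ℕ) (j : Fin d) :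
    pdm1 α (pd2 j f) = pd2 j (pdm1 α f) :=
  (U_foldT (fun k => pd1 k) (fun k => pd1 k) hS1 (pd2 j)
    (fun k g hg => (pd1_pd2_comm hg k j).symm) hf α _).symm

lemma pdm_pd1 (hf : Smooth2 f) (β γ : Fin d → ℕ) (j : Fin d) :
    pdm β γ (pd1 j f) = pdm (β + Pi.single j 1) γ f := by
  unfold pdm
  rw [pdm2_pd1 hf, ← pdm1_add_single_in (smooth2_pdm2 hf γ)]

lemma pdm_pd2 (hf : Smooth2 f) (β γ : Fin d → ℕ) (j : Fin d) :
    pdm β γ (pd2 j f) = pdm β (γ + Pi.single j 1) f := by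
  unfold pdm
  rw [← pdm2_add_single_in hf]

lemma pdm1_pdm1_aux : ∀ n : ℕ, ∀ f : Vd d → Vd d → F, Smooth2 f →
    ∀ pp β : Fin d → ℕ, mAbs pp = n → pdm1 β (pdm1 pp f) = pdm1 (β + pp) f := by
  intro n
  induction n with
  | zero =>
    intro f hf pp β hpp
    rw [mAbs_eq_zero hpp, pdm1_zero_idx, add_zero]
  | succ n ih =>
    intro f hf pp β hpp
    have hpp0 : pp ≠ 0 := by
      intro h
      rw [h, mAbs_zero] at hpp
      exact Nat.succ_ne_zero n hpp.symm
    obtain ⟨j, pp', hsplit, hcount⟩ := split_exists hpp0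
    subst hsplit
    rw [pdm1_add_single_in hf, ih (pd1 j f) (smooth2_pd1 hf j) pp' β (by omega),
      ← pdm1_add_single_in hf, add_assoc]

lemma pdm1_pdm1 (hf : Smooth2 f) (pp β : Fin d → ℕ) :
    pdm1 β (pdm1 pp f) = pdm1 (β + pp) f :=
  pdm1_pdm1_aux (mAbs pp) f hf pp β rfl

lemma pdm2_pdm1_comm (hf : Smooth2 f) (γ pp : Fin d → ℕ) :
    pdm2 γ (pdm1 pp f) = pdm1 pp (pdm2 γ f) :=
  U_foldT (fun k => pd1 k) (fun k => pd1 k) hS1 (pdm2 γ)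
    (fun k g hg => pdm2_pd1 hg γ k) hf pp _

lemma pdm_pdm1 (hf : Smooth2 f) (β γ pp : Fin d → ℕ) :
    pdm β γ (pdm1 pp f) = pdm (β + pp) γ f := by
  unfold pdm
  rw [pdm2_pdm1_comm hf, pdm1_pdm1 (smooth2_pdm2 hf γ)]

lemma pdm_const (c : F) {β γ : Fin d → ℕ} (h : ¬(β = 0 ∧ γ = 0)) :
    pdm β γ (fun _ _ : Vd d => c) = 0 := by
  by_cases hγ : γ = 0
  · have hβ : β ≠ 0 := fun hb => h ⟨hb, hγ⟩
    obtain ⟨j, β', hsplit, _⟩ := split_exists hβ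
    unfold pdm
    rw [hγ, pdm2_zero_idx, hsplit, pdm1_add_single_in (smooth2_const c),
      pd1_const, pdm1_zero_fn]
  · obtain ⟨j, γ', hsplit, _⟩ := split_exists hγ
    unfold pdm
    rw [hsplit, pdm2_add_single_in (smooth2_const c), pd2_const, pdm2_zero_fn,
      pdm1_zero_fn]

lemma pdm1_coe {f : Vd d → Vd d → ℝ} (hf : Smooth2 f) (pp : Fin d → ℕ) :
    pdm1 pp (fun x ξ => ((f x ξ : ℝ) : ℂ)) = fun x ξ => ((pdm1 pp f x ξ : ℝ) : ℂ) :=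
  (U_foldT (fun k => pd1 k) (fun k => pd1 k) hS1
    (fun g => (fun x ξ => ((g x ξ : ℝ) : ℂ)))
    (fun k g hg => by
      have := (pd1_coe hg k).symm
      simpa using this) hf pp _).symm

lemma pdm2_coe {f : Vd d → Vd d → ℝ} (hf : Smooth2 f) (pp : Fin d → ℕ) :
    pdm2 pp (fun x ξ => ((f x ξ : ℝ) : ℂ)) = fun x ξ => ((pdm2 pp f x ξ : ℝ) : ℂ) :=
  (U_foldT (fun k => pd2 k) (fun k => pd2 k) hS2
    (fun g => (fun x ξ => ((g x ξ : ℝ) : ℂ)))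
    (fun k g hg => by
      have := (pd2_coe hg k).symm
      simpa using this) hf pp _).symm

lemma pdm_coe {f : Vd d → Vd d → ℝ} (hf : Smooth2 f) (β γ : Fin d → ℕ) :
    pdm β γ (fun x ξ => ((f x ξ : ℝ) : ℂ)) = fun x ξ => ((pdm β γ f x ξ : ℝ) : ℂ) := by
  unfold pdm
  rw [pdm2_coe hf, pdm1_coe (smooth2_pdm2 hf γ)]

lemma pdm1_constMul {g : Vd d → Vd d → ℂ} (hg : Smooth2 g) (c : ℂ) (pp : Fin d → ℕ) :
    pdm1 pp ((fun _ _ => c) * g) = (fun _ _ => c) * pdm1 pp g :=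
  (U_foldT (fun k => pd1 k) (fun k => pd1 k) hS1
    (fun h => (fun _ _ => c) * h)
    (fun k h hh => (pd1_constMul hh c k).symm) hg pp _).symm

end Pdm

/-! #### Japanese bracket estimates -/

lemma one_le_jb (x : Vd d) : 1 ≤ jb x := by
  rw [jb]
  calc (1 : ℝ) = 1 ^ ((1 : ℝ) / 2) := (Real.one_rpow _).symm
    _ ≤ _ := by
      apply Real.rpow_le_rpow zero_le_one _ (by norm_num)
      have : (0 : ℝ) ≤ ∑ j, x j ^ 2 := Finset.sum_nonneg fun j _ => sq_nonneg _
      linarith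

lemma jb_pos (x : Vd d) : 0 < jb x := lt_of_lt_of_le one_pos (one_le_jb x)

lemma jb_rpow_pos (x : Vd d) (a : ℝ) : 0 < jb x ^ a := Real.rpow_pos_of_pos (jb_pos x) a

lemma jb_rpow_le (x : Vd d) {a b : ℝ} (h : a ≤ b) : jb x ^ a ≤ jb x ^ b :=
  Real.rpow_le_rpow_of_exponent_le (one_le_jb x) h

lemma mOrd_add (π' ρ : Fin d → ℕ) : mOrd (π' + ρ) = mOrd π' + mOrd ρ := by
  simp [mOrd, Finset.sum_add_distrib]

lemma mOrd_single (j : Fin d) : mOrd (Pi.single j 1 : Fin d → ℕ) = 1 := by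
  rw [mOrd_natCast, mAbs_single, Nat.cast_one]

lemma mOrd_zero : mOrd (0 : Fin d → ℕ) = 0 := by simp [mOrd]

/-! #### The SG estimate predicate -/

/-- `f` satisfies SG estimates of order `(m, μ)`. -/
def SGb (m μ : ℝ) (f : Vd d → Vd d → ℂ) : Prop :=
  Smooth2 f ∧ ∀ β γ : Fin d → ℕ, ∃ C : ℝ, 0 < C ∧ ∀ x ξ : Vd d,
    ‖pdm β γ f x ξ‖ ≤ C * jb x ^ (m - mOrd β) * jb ξ ^ (μ - mOrd γ)

lemma SGb_congr {m μ m' μ' : ℝ} {f : Vd d → Vd d → ℂ} (hm : m = m') (hμ : μ = μ')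
    (h : SGb m μ f) : SGb m' μ' f := hm ▸ hμ ▸ h

lemma SGb_mono {m μ m' μ' : ℝ} {f : Vd d → Vd d → ℂ} (h : SGb m μ f) (hm : m ≤ m')
    (hμ : μ ≤ μ') : SGb m' μ' f := by
  refine ⟨h.1, fun β γ => ?_⟩
  obtain ⟨C, hC, hb⟩ := h.2 β γ
  refine ⟨C, hC, fun x ξ => ?_⟩
  refine (hb x ξ).trans ?_
  have h1 := jb_rpow_le x (sub_le_sub_right hm (mOrd β))
  have h2 := jb_rpow_le ξ (sub_le_sub_right hμ (mOrd γ))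
  calc C * jb x ^ (m - mOrd β) * jb ξ ^ (μ - mOrd γ)
      ≤ C * jb x ^ (m' - mOrd β) * jb ξ ^ (μ - mOrd γ) :=
        mul_le_mul_of_nonneg_right (mul_le_mul_of_nonneg_left h1 hC.le)
          (jb_rpow_pos ξ (μ - mOrd γ)).le
    _ ≤ C * jb x ^ (m' - mOrd β) * jb ξ ^ (μ' - mOrd γ) :=
        mul_le_mul_of_nonneg_left h2
          (mul_nonneg hC.le (jb_rpow_pos x (m' - mOrd β)).le)

lemma SGb_zero_fn (m μ : ℝ) : SGb m μ (0 : Vd d → Vd d → ℂ) := by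
  refine ⟨smooth2_zero, fun β γ => ⟨1, one_pos, fun x ξ => ?_⟩⟩
  rw [pdm_zero_fn]
  simp only [Pi.zero_apply, norm_zero]
  exact (mul_pos (mul_pos one_pos (jb_rpow_pos x (m - mOrd β))) (jb_rpow_pos ξ (μ - mOrd γ))).le

lemma SGb_const (c : ℂ) : SGb 0 0 (fun _ _ : Vd d => c) := by
  refine ⟨smooth2_const c, fun β γ => ⟨‖c‖ + 1, by positivity, fun x ξ => ?_⟩⟩
  by_cases h : β = 0 ∧ γ = 0
  · obtain ⟨hβ, hγ⟩ := h
    subst hβ; subst hγ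
    rw [pdm_zero_idx]
    simp only [mOrd_zero, zero_sub, neg_zero, sub_zero]
    rw [Real.rpow_zero, Real.rpow_zero, mul_one, mul_one]
    linarith [norm_nonneg c]
  · rw [pdm_const c h]
    simp only [Pi.zero_apply, norm_zero]
    have h1 : (0:ℝ) < ‖c‖ + 1 := by positivity
    exact (mul_pos (mul_pos h1 (jb_rpow_pos x (0 - mOrd β))) (jb_rpow_pos ξ (0 - mOrd γ))).le

lemma SGb_add {m μ : ℝ} {f g : Vd d → Vd d → ℂ} (hf : SGb m μ f) (hg : SGb m μ g) :
    SGb m μ (f + g) := by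
  refine ⟨smooth2_add hf.1 hg.1, fun β γ => ?_⟩
  obtain ⟨C₁, hC₁, h₁⟩ := hf.2 β γ
  obtain ⟨C₂, hC₂, h₂⟩ := hg.2 β γ
  refine ⟨C₁ + C₂, by positivity, fun x ξ => ?_⟩
  rw [pdm_add hf.1 hg.1]
  calc ‖(pdm β γ f + pdm β γ g) x ξ‖ ≤ ‖pdm β γ f x ξ‖ + ‖pdm β γ g x ξ‖ :=
        norm_add_le _ _
    _ ≤ C₁ * jb x ^ (m - mOrd β) * jb ξ ^ (μ - mOrd γ)
        + C₂ * jb x ^ (m - mOrd β) * jb ξ ^ (μ - mOrd γ) := add_le_add (h₁ x ξ) (h₂ x ξ)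
    _ = (C₁ + C₂) * jb x ^ (m - mOrd β) * jb ξ ^ (μ - mOrd γ) := by ring

lemma SGb_sum {m μ : ℝ} {k : ℕ} {G : Fin k → Vd d → Vd d → ℂ}
    (h : ∀ i, SGb m μ (G i)) : SGb m μ (∑ i, G i) := by
  classical
  refine Finset.sum_induction G (SGb m μ) (fun a b ha hb => SGb_add ha hb)
    (SGb_zero_fn m μ) (fun i _ => h i)

lemma SGb_pd1 {m μ : ℝ} {f : Vd d → Vd d → ℂ} (h : SGb m μ f) (j : Fin d) :
    SGb (m - 1) μ (pd1 j f) := by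
  refine ⟨smooth2_pd1 h.1 j, fun β γ => ?_⟩
  obtain ⟨C, hC, hb⟩ := h.2 (β + Pi.single j 1) γ
  refine ⟨C, hC, fun x ξ => ?_⟩
  rw [pdm_pd1 h.1 β γ j]
  have he : m - mOrd (β + Pi.single j 1) = m - 1 - mOrd β := by
    rw [mOrd_add, mOrd_single]; ring
  rw [← he]
  exact hb x ξ

lemma SGb_pd2 {m μ : ℝ} {f : Vd d → Vd d → ℂ} (h : SGb m μ f) (j : Fin d) :
    SGb m (μ - 1) (pd2 j f) := by
  refine ⟨smooth2_pd2 h.1 j, fun β γ => ?_⟩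
  obtain ⟨C, hC, hb⟩ := h.2 β (γ + Pi.single j 1)
  refine ⟨C, hC, fun x ξ => ?_⟩
  rw [pdm_pd2 h.1 β γ j]
  have he : μ - mOrd (γ + Pi.single j 1) = μ - 1 - mOrd γ := by
    rw [mOrd_add, mOrd_single]; ring
  rw [← he]
  exact hb x ξ

lemma SGb_mul_aux : ∀ n : ℕ, ∀ (m μ m' μ' : ℝ) (f g : Vd d → Vd d → ℂ),
    SGb m μ f → SGb m' μ' g → ∀ β γ : Fin d → ℕ, mAbs β + mAbs γ ≤ n →
    ∃ C : ℝ, 0 < C ∧ ∀ x ξ : Vd d, ‖pdm β γ (f * g) x ξ‖ ≤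
      C * jb x ^ (m + m' - mOrd β) * jb ξ ^ (μ + μ' - mOrd γ) := by
  intro n
  induction n with
  | zero =>
    intro m μ m' μ' f g hf hg β γ hn
    have hβ : β = 0 := mAbs_eq_zero (by omega)
    have hγ : γ = 0 := mAbs_eq_zero (by omega)
    subst hβ; subst hγ
    obtain ⟨C₁, hC₁, h₁⟩ := hf.2 0 0
    obtain ⟨C₂, hC₂, h₂⟩ := hg.2 0 0
    refine ⟨C₁ * C₂, by positivity, fun x ξ => ?_⟩
    rw [pdm_zero_idx]
    have e1 := h₁ x ξ
    have e2 := h₂ x ξ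
    rw [pdm_zero_idx] at e1 e2
    simp only [mOrd_zero, sub_zero] at e1 e2 ⊢
    have hnm : ‖(f * g) x ξ‖ = ‖f x ξ‖ * ‖g x ξ‖ := by simp
    rw [hnm]
    calc ‖f x ξ‖ * ‖g x ξ‖
        ≤ (C₁ * jb x ^ m * jb ξ ^ μ) * (C₂ * jb x ^ m' * jb ξ ^ μ') := by
          exact mul_le_mul e1 e2 (norm_nonneg _)
            (mul_nonneg (mul_nonneg hC₁.le (jb_rpow_pos x m).le) (jb_rpow_pos ξ μ).le)
      _ = C₁ * C₂ * (jb x ^ m * jb x ^ m') * (jb ξ ^ μ * jb ξ ^ μ') := by ring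
      _ = C₁ * C₂ * jb x ^ (m + m') * jb ξ ^ (μ + μ') := by
          rw [← Real.rpow_add (jb_pos x), ← Real.rpow_add (jb_pos ξ)]
  | succ n ih =>
    intro m μ m' μ' f g hf hg β γ hn
    by_cases h0 : mAbs β + mAbs γ ≤ n
    · exact ih m μ m' μ' f g hf hg β γ h0
    have hfg : Smooth2 (f * g) := smooth2_mul hf.1 hg.1
    by_cases hβ : β = 0
    · have hγ : γ ≠ 0 := by
        intro h
        rw [hβ, h] at h0
        simp [mAbs_zero] at h0
      obtain ⟨j, γ', hsplit, hcount⟩ := split_exists hγ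
      have key : pdm β γ (f * g) = pdm β γ' (pd2 j f * g) + pdm β γ' (f * pd2 j g) := by
        rw [hsplit, ← pdm_pd2 hfg β γ' j, pd2_mul hf.1 hg.1 j,
          pdm_add (smooth2_mul (smooth2_pd2 hf.1 j) hg.1)
            (smooth2_mul hf.1 (smooth2_pd2 hg.1 j))]
      have hc1 : mAbs β + mAbs γ' ≤ n := by omega
      obtain ⟨C₁, hC₁, e₁⟩ := ih m (μ - 1) m' μ' (pd2 j f) g (SGb_pd2 hf j) hg β γ' hc1
      obtain ⟨C₂, hC₂, e₂⟩ := ih m μ m' (μ' - 1) f (pd2 j g) hf (SGb_pd2 hg j) β γ' hc1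
      have hmOrd : mOrd γ = mOrd γ' + 1 := by rw [hsplit, mOrd_add, mOrd_single]
      have hY1 : μ - 1 + μ' - mOrd γ' = μ + μ' - mOrd γ := by rw [hmOrd]; ring
      have hY2 : μ + (μ' - 1) - mOrd γ' = μ + μ' - mOrd γ := by rw [hmOrd]; ring
      refine ⟨C₁ + C₂, by positivity, fun x ξ => ?_⟩
      rw [key]
      have e1 := e₁ x ξ
      have e2 := e₂ x ξ
      rw [hY1] at e1
      rw [hY2] at e2
      calc ‖(pdm β γ' (pd2 j f * g) + pdm β γ' (f * pd2 j g)) x ξ‖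
          ≤ ‖pdm β γ' (pd2 j f * g) x ξ‖ + ‖pdm β γ' (f * pd2 j g) x ξ‖ := norm_add_le _ _
        _ ≤ C₁ * jb x ^ (m + m' - mOrd β) * jb ξ ^ (μ + μ' - mOrd γ)
            + C₂ * jb x ^ (m + m' - mOrd β) * jb ξ ^ (μ + μ' - mOrd γ) := add_le_add e1 e2
        _ = (C₁ + C₂) * jb x ^ (m + m' - mOrd β) * jb ξ ^ (μ + μ' - mOrd γ) := by ring
    · obtain ⟨j, β', hsplit, hcount⟩ := split_exists hβ
      have key : pdm β γ (f * g) = pdm β' γ (pd1 j f * g) + pdm β' γ (f * pd1 j g) := by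
        rw [hsplit, ← pdm_pd1 hfg β' γ j, pd1_mul hf.1 hg.1 j,
          pdm_add (smooth2_mul (smooth2_pd1 hf.1 j) hg.1)
            (smooth2_mul hf.1 (smooth2_pd1 hg.1 j))]
      have hc1 : mAbs β' + mAbs γ ≤ n := by omega
      obtain ⟨C₁, hC₁, e₁⟩ := ih (m - 1) μ m' μ' (pd1 j f) g (SGb_pd1 hf j) hg β' γ hc1
      obtain ⟨C₂, hC₂, e₂⟩ := ih m μ (m' - 1) μ' f (pd1 j g) hf (SGb_pd1 hg j) β' γ hc1
      have hmOrd : mOrd β = mOrd β' + 1 := by rw [hsplit, mOrd_add, mOrd_single]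
      have hY1 : m - 1 + m' - mOrd β' = m + m' - mOrd β := by rw [hmOrd]; ring
      have hY2 : m + (m' - 1) - mOrd β' = m + m' - mOrd β := by rw [hmOrd]; ring
      refine ⟨C₁ + C₂, by positivity, fun x ξ => ?_⟩
      rw [key]
      have e1 := e₁ x ξ
      have e2 := e₂ x ξ
      rw [hY1] at e1
      rw [hY2] at e2
      calc ‖(pdm β' γ (pd1 j f * g) + pdm β' γ (f * pd1 j g)) x ξ‖
          ≤ ‖pdm β' γ (pd1 j f * g) x ξ‖ + ‖pdm β' γ (f * pd1 j g) x ξ‖ := norm_add_le _ _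
        _ ≤ C₁ * jb x ^ (m + m' - mOrd β) * jb ξ ^ (μ + μ' - mOrd γ)
            + C₂ * jb x ^ (m + m' - mOrd β) * jb ξ ^ (μ + μ' - mOrd γ) := add_le_add e1 e2
        _ = (C₁ + C₂) * jb x ^ (m + m' - mOrd β) * jb ξ ^ (μ + μ' - mOrd γ) := by ring

lemma SGb_mul {m μ m' μ' : ℝ} {f g : Vd d → Vd d → ℂ} (hf : SGb m μ f)
    (hg : SGb m' μ' g) : SGb (m + m') (μ + μ') (f * g) :=
  ⟨smooth2_mul hf.1 hg.1, fun β γ =>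
    SGb_mul_aux (mAbs β + mAbs γ) m μ m' μ' f g hf hg β γ le_rfl⟩

/-! #### More pointwise rules -/

lemma pd1_sub {f g : Vd d → Vd d → F} (hf : Smooth2 f) (hg : Smooth2 g) (j : Fin d) :
    pd1 j (f - g) = pd1 j f - pd1 j g := by
  funext x ξ
  show fderiv ℝ (fun y => (f - g) y ξ) x (Pi.single j 1) = _
  simp only [Pi.sub_apply]
  rw [fderiv_fun_sub (smooth2_diff1 hf ξ x) (smooth2_diff1 hg ξ x)]
  rfl

lemma smooth2_sub {f g : Vd d → Vd d → F} (hf : Smooth2 f) (hg : Smooth2 g) :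
    Smooth2 (f - g) := ContDiff.sub hf hg

lemma pd1_constY (g : Vd d → F) (j : Fin d) : pd1 j (fun _ η => g η) = 0 := by
  funext x ξ
  show fderiv ℝ (fun _ => g ξ) x (Pi.single j 1) = 0
  simp

lemma eq_single_of_mAbs_one {pp : Fin d → ℕ} (h : mAbs pp = 1) :
    ∃ j, pp = Pi.single j 1 := by
  have hne : pp ≠ 0 := by
    intro h0
    rw [h0, mAbs_zero] at h
    omega
  obtain ⟨j, pp', hsplit, hcount⟩ := split_exists hne
  have h0 : mAbs pp' = 0 := by omega
  rw [mAbs_eq_zero h0, zero_add] at hsplit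
  exact ⟨j, hsplit⟩

/-! #### The phase-specific development -/

section Phase

variable (φ : Vd d → Vd d → ℝ)

/-- Complexification of `φ`. -/
def phiC : Vd d → Vd d → ℂ := fun x ξ => ((φ x ξ : ℝ) : ℂ)

/-- The section of `ψ` (complexified), `y, η ↦ ψ(x,y,η)`. -/
def psiX (x : Vd d) : Vd d → Vd d → ℂ := fun y η => ((psiPh φ x y η : ℝ) : ℂ)

/-- `i ψ(x,·,·)`. -/
def uu (x : Vd d) : Vd d → Vd d → ℂ := (fun _ _ => Complex.I) * psiX φ x

/-- `e^{iψ(x,·,·)}`. -/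
def EE (x : Vd d) : Vd d → Vd d → ℂ :=
  fun y η => Complex.exp (Complex.I * ((psiPh φ x y η : ℝ) : ℂ))

/-- `∂_y^π (iψ)(x,·,·)`. -/
def Dt (pp : Fin d → ℕ) (x : Vd d) : Vd d → Vd d → ℂ := pdm1 pp (uu φ x)

/-- Products of `Dt` factors. -/
def PP (L : List (Fin d → ℕ)) (x : Vd d) : Vd d → Vd d → ℂ :=
  (L.map fun pp => Dt φ pp x).prod

/-- The `y`-affine part of `ψ(x,·,·)`. -/
def LL (x : Vd d) : Vd d → Vd d → ℂ := psiX φ x - phiC φ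

variable {φ}

lemma EE_eq (x : Vd d) : EE φ x = fun y η => Complex.exp (uu φ x y η) := rfl

lemma PP_nil (x : Vd d) : PP φ [] x = 1 := rfl

lemma PP_cons (pp : Fin d → ℕ) (L : List (Fin d → ℕ)) (x : Vd d) :
    PP φ (pp :: L) x = Dt φ pp x * PP φ L x := by
  simp [PP]

variable (hsm : Smooth2 φ)

include hsm

lemma smooth2_psiR (x : Vd d) : Smooth2 (fun y η : Vd d => psiPh φ x y η) := by
  rw [smooth2_iff]
  have h1 : ContDiff ℝ (⊤ : ℕ∞) (fun p : Vd d × Vd d => φ p.1 p.2) := hsm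
  have h2 : ContDiff ℝ (⊤ : ℕ∞) (fun p : Vd d × Vd d => φ x p.2) := by
    have := (smooth2_iff.1 hsm).comp
      ((contDiff_const (c := x)).prodMk (contDiff_snd (E := Vd d) (F := Vd d)))
    exact this
  have h3 : ContDiff ℝ (⊤ : ℕ∞) (fun p : Vd d × Vd d => dotR (p.1 - x) (gradX φ x p.2)) := by
    have he : (fun p : Vd d × Vd d => dotR (p.1 - x) (gradX φ x p.2))
        = fun p => ∑ k, (p.1 k - x k) * pd1 k φ x p.2 := by
      funext p
      simp [dotR, gradX]
    rw [he]
    apply ContDiff.sum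
    intro k _
    apply ContDiff.mul
    · exact ((ContinuousLinearMap.proj k :
        Vd d →L[ℝ] ℝ).contDiff.comp contDiff_fst).sub contDiff_const
    · have := (smooth2_iff.1 (smooth2_pd1 hsm k)).comp
        ((contDiff_const (c := x)).prodMk (contDiff_snd (E := Vd d) (F := Vd d)))
      exact this
  exact (h1.sub h2).sub h3

lemma smooth2_psiX (x : Vd d) : Smooth2 (psiX φ x) :=
  smooth2_coe (smooth2_psiR hsm x)

lemma smooth2_phiC : Smooth2 (phiC φ) := smooth2_coe hsm

lemma smooth2_uu (x : Vd d) : Smooth2 (uu φ x) :=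
  smooth2_mul (smooth2_const _) (smooth2_psiX hsm x)

lemma smooth2_EE (x : Vd d) : Smooth2 (EE φ x) := by
  rw [EE_eq]
  exact smooth2_cexp (smooth2_uu hsm x)

lemma smooth2_Dt (pp : Fin d → ℕ) (x : Vd d) : Smooth2 (Dt φ pp x) :=
  smooth2_pdm1 (smooth2_uu hsm x) pp

lemma smooth2_PP (L : List (Fin d → ℕ)) (x : Vd d) : Smooth2 (PP φ L x) := by
  induction L with
  | nil => exact smooth2_const 1
  | cons pp t ih => rw [PP_cons]; exact smooth2_mul (smooth2_Dt hsm pp x) ih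

lemma pd1_psiX (x : Vd d) (j : Fin d) :
    pd1 j (psiX φ x) = fun y η => ((pd1 j φ y η - pd1 j φ x η : ℝ) : ℂ) := by
  funext y η
  set g : Vd d := gradX φ x η with hg
  have hL : HasFDerivAt (fun y' : Vd d => dotR (y' - x) g)
      (∑ k, g k • (ContinuousLinearMap.proj k : Vd d →L[ℝ] ℝ)) y := by
    have he : (fun y' : Vd d => dotR (y' - x) g)
        = fun y' => ∑ k, (y' k - x k) * g k := by
      funext y'
      simp [dotR]
    rw [he]
    apply HasFDerivAt.fun_sum
    intro k _
    exact (((ContinuousLinearMap.proj k : Vd d →L[ℝ] ℝ).hasFDerivAt).sub_const (x k)).mul_const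
      (g k)
  have h1 : HasFDerivAt (fun y' => φ y' η) (fderiv ℝ (fun y' => φ y' η) y) y :=
    (smooth2_diff1 hsm η y).hasFDerivAt
  have htot : HasFDerivAt (fun y' => psiPh φ x y' η)
      (fderiv ℝ (fun y' => φ y' η) y - ∑ k, g k • (ContinuousLinearMap.proj k : Vd d →L[ℝ] ℝ))
      y := by
    exact (h1.sub_const (φ x η)).sub hL
  have hC : HasFDerivAt (fun y' => ((psiPh φ x y' η : ℝ) : ℂ))
      (Complex.ofRealCLM.comp
        (fderiv ℝ (fun y' => φ y' η) y
          - ∑ k, g k • (ContinuousLinearMap.proj k : Vd d →L[ℝ] ℝ))) y :=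
    Complex.ofRealCLM.hasFDerivAt.comp y htot
  show fderiv ℝ (fun y' => ((psiPh φ x y' η : ℝ) : ℂ)) y (Pi.single j 1) = _
  rw [hC.fderiv]
  have hval : (fderiv ℝ (fun y' => φ y' η) y
      - ∑ k, g k • (ContinuousLinearMap.proj k : Vd d →L[ℝ] ℝ)) (Pi.single j 1)
      = pd1 j φ y η - g j := by
    rw [ContinuousLinearMap.sub_apply]
    congr 1
    rw [ContinuousLinearMap.sum_apply]
    simp only [ContinuousLinearMap.smul_apply, ContinuousLinearMap.proj_apply,
      smul_eq_mul, Pi.single_apply, mul_ite, mul_one, mul_zero]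
    rw [Finset.sum_ite_eq' Finset.univ j (fun k => g k)]
    simp
  rw [ContinuousLinearMap.comp_apply, hval]
  have hgj : g j = pd1 j φ x η := rfl
  rw [hgj]
  rfl

omit hsm in
lemma psiX_split (x : Vd d) : psiX φ x = phiC φ + LL φ x := by
  funext y η
  simp [LL]

lemma smooth2_LL (x : Vd d) : Smooth2 (LL φ x) :=
  smooth2_sub (smooth2_psiX hsm x) (smooth2_coe hsm)

lemma pd1_LL (x : Vd d) (j : Fin d) :
    pd1 j (LL φ x) = fun _ η => ((-(pd1 j φ x η) : ℝ) : ℂ) := by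
  rw [LL, pd1_sub (smooth2_psiX hsm x) (smooth2_phiC hsm), pd1_psiX hsm x j]
  have hph : pd1 j (phiC φ) = fun y η => ((pd1 j φ y η : ℝ) : ℂ) := pd1_coe hsm j
  rw [hph]
  funext y η
  simp only [Pi.sub_apply]
  push_cast
  ring

lemma pdm1_LL (x : Vd d) {pp : Fin d → ℕ} (h2 : 2 ≤ mAbs pp) :
    pdm1 pp (LL φ x) = 0 := by
  have hne : pp ≠ 0 := by
    intro h0
    rw [h0, mAbs_zero] at h2
    omega
  obtain ⟨j, pp', hsplit, hcount⟩ := split_exists hne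
  have hne' : pp' ≠ 0 := by
    intro h0
    rw [h0, mAbs_zero] at hcount
    omega
  obtain ⟨k, pp'', hsplit', _⟩ := split_exists hne'
  have hsmY : Smooth2 (fun _ η : Vd d => ((-(pd1 j φ x η) : ℝ) : ℂ)) := by
    rw [smooth2_iff]
    apply Complex.ofRealCLM.contDiff.comp
    have := (smooth2_iff.1 (smooth2_pd1 hsm j)).comp
      ((contDiff_const (c := x)).prodMk (contDiff_snd (E := Vd d) (F := Vd d)))
    have h' : ContDiff ℝ (⊤ : ℕ∞) (fun p : Vd d × Vd d => pd1 j φ x p.2) := by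
      exact this
    exact h'.neg
  rw [hsplit, pdm1_add_single_in (smooth2_LL hsm x), pd1_LL hsm x j, hsplit',
    pdm1_add_single_in hsmY, pd1_constY, pdm1_zero_fn]

lemma Dt_eq_of_two (x : Vd d) {pp : Fin d → ℕ} (h2 : 2 ≤ mAbs pp) :
    Dt φ pp x = (fun _ _ => Complex.I) * (fun y η => ((pdm1 pp φ y η : ℝ) : ℂ)) := by
  rw [Dt, uu, pdm1_constMul (smooth2_psiX hsm x), psiX_split x,
    pdm1_add (smooth2_phiC hsm) (smooth2_LL hsm x), pdm1_LL hsm x h2, add_zero]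
  congr 1
  exact pdm1_coe hsm pp

omit hsm in
lemma psiPh_diag (x ξ : Vd d) : psiPh φ x x ξ = 0 := by
  simp [psiPh, dotR]

omit hsm in
lemma EE_diag (x ξ : Vd d) : EE φ x x ξ = 1 := by
  rw [EE, psiPh_diag]
  simp

lemma Dt_single_diag (x ξ : Vd d) (j : Fin d) : Dt φ (Pi.single j 1) x x ξ = 0 := by
  have h1 : Dt φ (Pi.single j 1) x = pd1 j (uu φ x) := pdm1_single (smooth2_uu hsm x) j
  have h2 : pd1 j (uu φ x) = (fun _ _ => Complex.I) * pd1 j (psiX φ x) :=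
    pd1_constMul (smooth2_psiX hsm x) Complex.I j
  rw [h1, h2, pd1_psiX hsm x j]
  show Complex.I * ((pd1 j φ x ξ - pd1 j φ x ξ : ℝ) : ℂ) = 0
  simp

omit hsm in
lemma prod_fn_apply (l : List (Vd d → Vd d → ℂ)) (x ξ : Vd d) :
    l.prod x ξ = (l.map fun f => f x ξ).prod := by
  induction l with
  | nil => rfl
  | cons a t ih => simp [List.prod_cons, ih]

omit hsm in
lemma PP_apply (L : List (Fin d → ℕ)) (x y η : Vd d) :
    PP φ L x y η = (L.map fun pp => Dt φ pp x y η).prod := by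
  rw [PP, prod_fn_apply, List.map_map]
  rfl

end Phase

/-! #### SG bound for derivatives of `φ` -/

lemma SGb_phi {φ : Vd d → Vd d → ℝ} (hφ : SGClass d 1 1 (vth 1 1) φ) (pp : Fin d → ℕ) :
    SGb (1 - mOrd pp) 1 (fun x ξ => ((pdm1 pp φ x ξ : ℝ) : ℂ)) := by
  obtain ⟨hsm, hb⟩ := hφ
  refine ⟨smooth2_coe (smooth2_pdm1 hsm pp), fun β γ => ?_⟩
  obtain ⟨C, hC, h⟩ := hb (β + pp) γ
  refine ⟨C, hC, fun x ξ => ?_⟩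
  have e1 : pdm β γ (fun x ξ => ((pdm1 pp φ x ξ : ℝ) : ℂ))
      = fun x ξ => ((pdm β γ (pdm1 pp φ) x ξ : ℝ) : ℂ) :=
    pdm_coe (smooth2_pdm1 hsm pp) β γ
  rw [e1]
  have e2 : pdm β γ (pdm1 pp φ) = pdm (β + pp) γ φ := pdm_pdm1 hsm β γ pp
  rw [e2]
  rw [Complex.norm_real]
  refine (h x ξ).trans (le_of_eq ?_)
  unfold vth
  rw [mOrd_add]
  rw [show (1:ℝ) - mOrd pp - mOrd β = 1 + -(1 * (mOrd β + mOrd pp)) by ring,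
    show (1:ℝ) - mOrd γ = 1 + -(1 * mOrd γ) by ring,
    Real.rpow_add (jb_pos x), Real.rpow_add (jb_pos ξ)]
  rw [Real.rpow_one, Real.rpow_one]
  ring

/-! #### The representation predicate -/

/-- `H x = Σ terms e^{iψ(x,·,·)} ∏ ∂_y^{π_j}(iψ)(x,·,·)` with total order `n`. -/
inductive Rep (φ : Vd d → Vd d → ℝ) : ℕ → (Vd d → Vd d → Vd d → ℂ) → Prop
  | term (L : List (Fin d → ℕ)) (h1 : ∀ pp ∈ L, 1 ≤ mAbs pp) :
      Rep φ ((L.map mAbs).sum) (fun x => PP φ L x * EE φ x)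
  | add {n : ℕ} {H H' : Vd d → Vd d → Vd d → ℂ} (h : Rep φ n H) (h' : Rep φ n H') :
      Rep φ n (fun x => H x + H' x)

section RepLemmas

variable {φ : Vd d → Vd d → ℝ}

lemma rep_cast {n n' : ℕ} {H : Vd d → Vd d → Vd d → ℂ} (h : n = n') (hr : Rep φ n H) :
    Rep φ n' H := h ▸ hr

variable (hsm : Smooth2 φ)

include hsm

lemma rep_smooth {n : ℕ} {H : Vd d → Vd d → Vd d → ℂ} (h : Rep φ n H) :
    ∀ x, Smooth2 (H x) := by
  induction h with
  | term L h1 => exact fun x => smooth2_mul (smooth2_PP hsm L x) (smooth2_EE hsm x)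
  | add h h' ih ih' => exact fun x => smooth2_add (ih x) (ih' x)

lemma rep_mulDt {pp : Fin d → ℕ} (hpp : 1 ≤ mAbs pp) {n : ℕ}
    {H : Vd d → Vd d → Vd d → ℂ} (h : Rep φ n H) :
    Rep φ (mAbs pp + n) (fun x => Dt φ pp x * H x) := by
  induction h with
  | term L h1 =>
    have he : (fun x => Dt φ pp x * (PP φ L x * EE φ x))
        = fun x => PP φ (pp :: L) x * EE φ x := by
      funext x
      rw [PP_cons, mul_assoc]
    rw [he]
    refine rep_cast (by simp) (Rep.term (pp :: L) ?_)
    intro q hq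
    rcases List.mem_cons.1 hq with h | h
    · exact h ▸ hpp
    · exact h1 q h
  | @add n H H' h h' ih ih' =>
    have he : (fun x => Dt φ pp x * (H x + H' x))
        = fun x => Dt φ pp x * H x + Dt φ pp x * H' x := by
      funext x
      exact mul_add _ _ _
    rw [he]
    exact Rep.add ih ih'

lemma rep_pd1_term (j : Fin d) : ∀ L : List (Fin d → ℕ), (∀ pp ∈ L, 1 ≤ mAbs pp) →
    Rep φ ((L.map mAbs).sum + 1) (fun x => pd1 j (PP φ L x * EE φ x)) := by
  intro L
  induction L with
  | nil =>
    intro _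
    have he : (fun x => pd1 j (PP φ [] x * EE φ x))
        = fun x => PP φ [Pi.single j 1] x * EE φ x := by
      funext x
      rw [PP_nil, one_mul]
      have e1 : pd1 j (EE φ x)
          = fun y η => Complex.exp (uu φ x y η) * pd1 j (uu φ x) y η :=
        pd1_cexp (smooth2_uu hsm x) j
      rw [e1, PP_cons, PP_nil, mul_one]
      have e2 : Dt φ (Pi.single j 1) x = pd1 j (uu φ x) := pdm1_single (smooth2_uu hsm x) j
      rw [e2]
      funext y η
      show Complex.exp (uu φ x y η) * pd1 j (uu φ x) y η
          = pd1 j (uu φ x) y η * EE φ x y η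
      rw [EE_eq]
      ring
    rw [he]
    refine rep_cast (by simp [mAbs_single]) (Rep.term [Pi.single j 1] ?_)
    intro q hq
    simp only [List.mem_singleton] at hq
    rw [hq, mAbs_single]
  | cons pp t ih =>
    intro hall
    have hhead : 1 ≤ mAbs pp := hall pp List.mem_cons_self
    have htail : ∀ q ∈ t, 1 ≤ mAbs q := fun q hq => hall q (List.mem_cons_of_mem pp hq)
    have key : (fun x => pd1 j (PP φ (pp :: t) x * EE φ x)) =
        fun x => (PP φ ((pp + Pi.single j 1) :: t) x * EE φ x)
          + Dt φ pp x * pd1 j (PP φ t x * EE φ x) := by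
      funext x
      have hrest : Smooth2 (PP φ t x * EE φ x) :=
        smooth2_mul (smooth2_PP hsm t x) (smooth2_EE hsm x)
      rw [PP_cons, mul_assoc, pd1_mul (smooth2_Dt hsm pp x) hrest j]
      congr 1
      rw [PP_cons, mul_assoc]
      congr 1
      show pd1 j (pdm1 pp (uu φ x)) = pdm1 (pp + Pi.single j 1) (uu φ x)
      exact (pdm1_add_single_out (smooth2_uu hsm x) pp j).symm
    rw [key]
    refine Rep.add ?_ ?_
    · refine rep_cast ?_ (Rep.term ((pp + Pi.single j 1) :: t) ?_)
      · simp only [List.map_cons, List.sum_cons, mAbs_add, mAbs_single]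
        omega
      · intro q hq
        rcases List.mem_cons.1 hq with h | h
        · rw [h, mAbs_add, mAbs_single]
          omega
        · exact htail q h
    · refine rep_cast ?_ (rep_mulDt hsm hhead (ih htail))
      simp only [List.map_cons, List.sum_cons]
      omega

lemma rep_pd1 (j : Fin d) {n : ℕ} {H : Vd d → Vd d → Vd d → ℂ} (h : Rep φ n H) :
    Rep φ (n + 1) (fun x => pd1 j (H x)) := by
  induction h with
  | term L h1 => exact rep_pd1_term hsm j L h1
  | @add n H H' h h' ih ih' =>
    have he : (fun x => pd1 j (H x + H' x)) = fun x => pd1 j (H x) + pd1 j (H' x) := by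
      funext x
      exact pd1_add (rep_smooth hsm h x) (rep_smooth hsm h' x) j
    rw [he]
    exact Rep.add ih ih'

lemma rep_pdm1 : ∀ (n : ℕ) (α : Fin d → ℕ), mAbs α = n →
    Rep φ n (fun x => pdm1 α (EE φ x)) := by
  intro n
  induction n with
  | zero =>
    intro α hα
    rw [mAbs_eq_zero hα]
    have he : (fun x => pdm1 (0 : Fin d → ℕ) (EE φ x)) = fun x => PP φ [] x * EE φ x := by
      funext x
      rw [pdm1_zero_idx, PP_nil, one_mul]
    rw [he]
    exact rep_cast (by simp) (Rep.term [] (by simp))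
  | succ n ih =>
    intro α hα
    have hne : α ≠ 0 := by
      intro h0
      rw [h0, mAbs_zero] at hα
      omega
    obtain ⟨j, α', hsplit, hcount⟩ := split_exists hne
    have he : (fun x => pdm1 α (EE φ x)) = fun x => pd1 j (pdm1 α' (EE φ x)) := by
      funext x
      rw [hsplit, pdm1_add_single_out (smooth2_EE hsm x)]
    rw [he]
    exact rep_pd1 hsm j (ih α' (by omega))

end RepLemmas

/-! #### Diagonal restriction -/

/-- The diagonal restriction. -/
def DiagH (H : Vd d → Vd d → Vd d → ℂ) : Vd d → Vd d → ℂ := fun x ξ => H x x ξ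

lemma two_len_le : ∀ L : List (Fin d → ℕ), (∀ pp ∈ L, 2 ≤ mAbs pp) →
    2 * L.length ≤ (L.map mAbs).sum := by
  intro L
  induction L with
  | nil => simp
  | cons pp t ih =>
    intro hall
    have h1 : 2 ≤ mAbs pp := hall pp List.mem_cons_self
    have h2 := ih fun q hq => hall q (List.mem_cons_of_mem pp hq)
    simp only [List.map_cons, List.sum_cons, List.length_cons]
    omega

lemma SGb_prod_list {φ : Vd d → Vd d → ℝ} (hφ : SGClass d 1 1 (vth 1 1) φ) :
    ∀ L : List (Fin d → ℕ), (∀ pp ∈ L, 2 ≤ mAbs pp) →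
    SGb ((L.length : ℝ) - (((L.map mAbs).sum : ℕ) : ℝ)) ((L.length : ℝ))
      ((L.map fun pp => (fun _ _ : Vd d => Complex.I)
        * (fun x ξ => ((pdm1 pp φ x ξ : ℝ) : ℂ))).prod) := by
  intro L
  induction L with
  | nil =>
    intro _
    simp only [List.map_nil, List.prod_nil, List.length_nil, List.sum_nil,
      Nat.cast_zero, sub_zero]
    exact SGb_const (1 : ℂ)
  | cons pp t ih =>
    intro hall
    have htail : ∀ q ∈ t, 2 ≤ mAbs q := fun q hq => hall q (List.mem_cons_of_mem pp hq)
    simp only [List.map_cons, List.prod_cons, List.length_cons, List.sum_cons]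
    have hQ : SGb (1 - mOrd pp) 1 ((fun _ _ : Vd d => Complex.I)
        * fun x ξ => ((pdm1 pp φ x ξ : ℝ) : ℂ)) := by
      have := SGb_mul (SGb_const (d := d) Complex.I) (SGb_phi hφ pp)
      exact SGb_congr (by ring) (by ring) this
    have hres := SGb_mul hQ (ih htail)
    refine SGb_congr ?_ ?_ hres
    · rw [mOrd_natCast]
      push_cast
      ring
    · push_cast
      ring

lemma diag_term {φ : Vd d → Vd d → ℝ} (hφ : SGClass d 1 1 (vth 1 1) φ)
    (L : List (Fin d → ℕ)) (h1 : ∀ pp ∈ L, 1 ≤ mAbs pp) :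
    SGb (-((((L.map mAbs).sum : ℕ) : ℝ)) / 2) (((((L.map mAbs).sum : ℕ)) : ℝ) / 2)
      (DiagH (fun x => PP φ L x * EE φ x)) := by
  by_cases hall : ∀ pp ∈ L, 2 ≤ mAbs pp
  · have hDiag : DiagH (fun x => PP φ L x * EE φ x)
        = (L.map fun pp => (fun _ _ : Vd d => Complex.I)
            * (fun x ξ => ((pdm1 pp φ x ξ : ℝ) : ℂ))).prod := by
      funext x ξ
      show PP φ L x x ξ * EE φ x x ξ = _
      rw [EE_diag, mul_one, PP_apply, prod_fn_apply, List.map_map]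
      congr 1
      apply List.map_congr_left
      intro pp hpp
      have hD := Dt_eq_of_two hφ.1 x (hall pp hpp)
      calc Dt φ pp x x ξ
          = ((fun _ _ : Vd d => Complex.I) * fun y η => ((pdm1 pp φ y η : ℝ) : ℂ)) x ξ := by
            rw [hD]
        _ = _ := rfl
    rw [hDiag]
    refine SGb_mono (SGb_prod_list hφ L hall) ?_ ?_
    · have h2l := two_len_le L hall
      have : ((2 * L.length : ℕ) : ℝ) ≤ (((L.map mAbs).sum : ℕ) : ℝ) := by
        exact_mod_cast h2l
      push_cast at this ⊢
      linarith
    · have h2l := two_len_le L hall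
      have : ((2 * L.length : ℕ) : ℝ) ≤ (((L.map mAbs).sum : ℕ) : ℝ) := by
        exact_mod_cast h2l
      push_cast at this ⊢
      linarith
  · push_neg at hall
    obtain ⟨pp0, hmem, hlt⟩ := hall
    have h1' : mAbs pp0 = 1 := by
      have := h1 pp0 hmem
      omega
    obtain ⟨j, hj⟩ := eq_single_of_mAbs_one h1'
    have hz : DiagH (fun x => PP φ L x * EE φ x) = 0 := by
      funext x ξ
      show PP φ L x x ξ * EE φ x x ξ = 0
      rw [PP_apply]
      have hzero : Dt φ pp0 x x ξ = 0 := by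
        rw [hj]
        exact Dt_single_diag hφ.1 x ξ j
      have hmem' : (0 : ℂ) ∈ L.map fun pp => Dt φ pp x x ξ := by
        have h' := List.mem_map_of_mem (f := fun pp => Dt φ pp x x ξ) hmem
        rwa [hzero] at h'
      rw [List.prod_eq_zero hmem', zero_mul]
    rw [hz]
    exact SGb_zero_fn _ _

lemma rep_diag {φ : Vd d → Vd d → ℝ} (hφ : SGClass d 1 1 (vth 1 1) φ) {n : ℕ}
    {H : Vd d → Vd d → Vd d → ℂ} (h : Rep φ n H) :
    SGb (-(n : ℝ) / 2) ((n : ℝ) / 2) (DiagH H) := by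
  induction h with
  | term L h1 => exact diag_term hφ L h1
  | @add n H H' h h' ih ih' =>
    have he : DiagH (fun x => H x + H' x) = DiagH H + DiagH H' := rfl
    rw [he]
    exact SGb_add ih ih'

end S9

end S9Aux

/-- Lemma (SG estimates for `(∂_y^α e^{iψ})|_{y=x}`). -/
theorem statement9 (d : ℕ) (φ : Vd d → Vd d → ℝ) (hφ : SGClass d 1 1 (vth 1 1) φ)
    (α : Fin d → ℕ) (hα : 1 ≤ mAbs α) :
    ∀ β γ : Fin d → ℕ, ∃ C : ℝ, 0 < C ∧ ∀ x ξ,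
      ‖pdm β γ (fun x' ξ' =>
          pdm1 α (fun y η => Complex.exp (Complex.I * (psiPh φ x' y η : ℂ))) x' ξ') x ξ‖
        ≤ C * jb x ^ (-(mAbs α : ℝ) / 2 - mOrd β) * jb ξ ^ ((mAbs α : ℝ) / 2 - mOrd γ) := by
  intro β γ
  have h1 := S9.rep_pdm1 (φ := φ) hφ.1 (mAbs α) α rfl
  have h2 := S9.rep_diag hφ h1
  obtain ⟨C, hC, hb⟩ := h2.2 β γ
  exact ⟨C, hC, fun x ξ => hb x ξ⟩
end
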